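/- arXiv:2104.05182 — 10 statements merged into one kernel-verified Lean document; each statement's English description precedes it below -/
import Mathlib

section
/- Let Θ be a finite set and c : (Θ → ℝ) → ℝ be submodular, i.e., c(O₁) + c(O₂) ≥ c(O₁ ∧ O₂) + c(O₁ ∨ O₂) for all O₁, O₂, where ∧ and ∨ are pointwise min and max. If O₁ and O₂ are both truthful with respect to a relation R (i.e., (i₁,i₂) ∈ R implies O(i₁) ≥ O(i₂)), then c(O₁ ∧ O₂) + c(O₁ ∨ O₂) ≤ c(O₁) + c(O₂) and both O₁ ∧ O₂ and O₁ ∨ O₂ are truthful. In particular, if O₁ and O₂ are both cost-minimizing truthful assignments, then so are O₁ ∧ O₂ and O₁ ∨ O₂. -/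
theorem submodular_truthful_min_max
    {Θ : Type*} [Fintype Θ] (R : Θ → Θ → Prop) (hR : ∀ i, R i i)
    (c : (Θ → ℝ) → ℝ)
    (hsub : ∀ O₁ O₂ : Θ → ℝ,
      c O₁ + c O₂ ≥ c (fun i => min (O₁ i) (O₂ i)) + c (fun i => max (O₁ i) (O₂ i)))
    (O₁ O₂ : Θ → ℝ)
    (h₁ : ∀ i₁ i₂, R i₁ i₂ → O₁ i₁ ≥ O₁ i₂)
    (h₂ : ∀ i₁ i₂, R i₁ i₂ → O₂ i₁ ≥ O₂ i₂) :
    (c (fun i => min (O₁ i) (O₂ i)) + c (fun i => max (O₁ i) (O₂ i)) ≤ c O₁ + c O₂) ∧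
    (∀ i₁ i₂, R i₁ i₂ → min (O₁ i₁) (O₂ i₁) ≥ min (O₁ i₂) (O₂ i₂)) ∧
    (∀ i₁ i₂, R i₁ i₂ → max (O₁ i₁) (O₂ i₁) ≥ max (O₁ i₂) (O₂ i₂)) ∧
    ((∀ O : Θ → ℝ, (∀ i₁ i₂, R i₁ i₂ → O i₁ ≥ O i₂) → c O₁ ≤ c O) →
     (∀ O : Θ → ℝ, (∀ i₁ i₂, R i₁ i₂ → O i₁ ≥ O i₂) → c O₂ ≤ c O) →
     (∀ O : Θ → ℝ, (∀ i₁ i₂, R i₁ i₂ → O i₁ ≥ O i₂) →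
        c (fun i => min (O₁ i) (O₂ i)) ≤ c O ∧ c (fun i => max (O₁ i) (O₂ i)) ≤ c O)) := by
  have hmin : ∀ i₁ i₂, R i₁ i₂ → min (O₁ i₁) (O₂ i₁) ≥ min (O₁ i₂) (O₂ i₂) := fun i₁ i₂ h =>
    le_min (min_le_of_left_le (h₁ i₁ i₂ h)) (min_le_of_right_le (h₂ i₁ i₂ h))
  have hmax : ∀ i₁ i₂, R i₁ i₂ → max (O₁ i₁) (O₂ i₁) ≥ max (O₁ i₂) (O₂ i₂) := fun i₁ i₂ h =>
    max_le (le_max_of_le_left (h₁ i₁ i₂ h)) (le_max_of_le_right (h₂ i₁ i₂ h))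
  refine ⟨hsub O₁ O₂, hmin, hmax, fun hm₁ hm₂ O hO => ?_⟩
  have a1 : c O₁ ≤ c (fun i => min (O₁ i) (O₂ i)) := hm₁ _ hmin
  have a2 : c O₂ ≤ c (fun i => max (O₁ i) (O₂ i)) := hm₂ _ hmax
  have hs := hsub O₁ O₂
  constructor
  · linarith [hm₁ O hO]
  · linarith [hm₂ O hO]
end

section
/- Let o₁ < o₂ < ... < o_m be real numbers (outcomes) and for each i in a finite type set Θ let p_i be a probability distribution on {o₁,...,o_m} supported on at most two consecutive outcomes: p_i puts mass 1−α_i on o_{j_i} and mass α_i on o_{j_i+1} with α_i ∈ [0,1). For r ∈ [0,1], define M_r(i) = o_{j_i+1} if r ≤ α_i, else o_{j_i}. Suppose for every (i₁,i₂) ∈ R the expected value of p_{i₁} is at least the expected value of p_{i₂}. Then for every r ∈ [0,1], M_r is truthful: for all (i₁,i₂) ∈ R, M_r(i₁) ≥ M_r(i₂). -/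
theorem consecutive_support_rounding_truthful
    {Θ : Type*} [Fintype Θ] (R : Θ → Θ → Prop) (hR : ∀ i, R i i)
    (o : ℕ → ℝ) (ho : StrictMono o)
    (j : Θ → ℕ) (α : Θ → ℝ)
    (hα : ∀ i, 0 ≤ α i ∧ α i < 1)
    (htruth : ∀ i₁ i₂, R i₁ i₂ →
      (1 - α i₁) * o (j i₁) + α i₁ * o (j i₁ + 1) ≥
        (1 - α i₂) * o (j i₂) + α i₂ * o (j i₂ + 1)) :
    ∀ r ∈ Set.Icc (0:ℝ) 1, ∀ i₁ i₂, R i₁ i₂ →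
      (if r ≤ α i₁ then o (j i₁ + 1) else o (j i₁)) ≥
        (if r ≤ α i₂ then o (j i₂ + 1) else o (j i₂)) := by
  intro r hr i₁ i₂ hRi
  have hEV := htruth i₁ i₂ hRi
  have hlt : ∀ i : Θ, o (j i) < o (j i + 1) := fun i => ho (Nat.lt_succ_self _)
  -- EV bounds: o (j i) ≤ EV i < o (j i + 1)
  have hlow : ∀ i : Θ, o (j i) ≤ (1 - α i) * o (j i) + α i * o (j i + 1) := by
    intro i
    nlinarith [(hα i).1, (hα i).2, hlt i]
  have hhigh : ∀ i : Θ, (1 - α i) * o (j i) + α i * o (j i + 1) < o (j i + 1) := by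
    intro i
    nlinarith [(hα i).1, (hα i).2, hlt i]
  have hjj : j i₂ ≤ j i₁ := by
    by_contra h
    push_neg at h
    have : o (j i₁ + 1) ≤ o (j i₂) := ho.monotone (by omega)
    linarith [hlow i₂, hhigh i₁]
  have heqcase : j i₁ = j i₂ → α i₂ ≤ α i₁ := by
    intro he
    rw [he] at hEV
    nlinarith [hlt i₂]
  by_cases h1 : r ≤ α i₁ <;> by_cases h2 : r ≤ α i₂ <;> simp [h1, h2]
  · exact ho.monotone (by omega)
  · exact ho.monotone (by omega)
  · -- α i₁ < r ≤ α i₂, so j i₁ > j i₂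
    push_neg at h1
    have : j i₁ ≠ j i₂ := fun he => absurd (heqcase he) (by linarith)
    exact ho.monotone (by omega)
  · exact ho.monotone (by omega)
end

section
/- Let the common utility function of all types be identical and let c_i be the principal's cost for type i, with piecewise-linear extension c_i^ℓ convex for every i. Then among all truthful randomized mechanisms (mappings from types to distributions over outcomes such that for every (i₁,i₂) ∈ R the expected utility of type i₁'s own assignment is at least that of type i₂'s), there exists a deterministic truthful mechanism whose total cost ∑_i E[c_i(M(i))] is minimal. -/
/-!
Round a truthful randomized mechanism to a deterministic one with a common random threshold.
The expected outcome `v` of a type lies in a cell `[o k, o (k+1)]` of consecutive outcomes; with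
`w = (v - o k) / (o (k+1) - o k)`, round `v` up to `o (k+1)` iff `t ≤ w`. For every `t` this
rounding is monotone in `v`, so it preserves truthfulness. For `t` uniform on `(0, 1]` its expected
cost is `∑ (1 - w) c (o k) + w c (o (k+1))`, which is at most the randomized cost because the line
through the chord of `c` over a cell lies below `c` at every outcome (a supporting line of the
convex `c^ℓ`); hence some `t` does at least as well. Finally, there are finitely many deterministic
mechanisms, and a cheapest truthful one is optimal.
-/

open MeasureTheory

theorem integral_Ioc_zero_one_ite_le {l : ℝ} (h0 : 0 ≤ l) (h1 : l ≤ 1) (a b : ℝ) :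
    ∫ t in Set.Ioc 0 1, (if t ≤ l then b else a) = (1 - l) * a + l * b := by
  have hind : (fun t : ℝ => if t ≤ l then b else a) =
      fun t => a + (Set.Iic l).indicator (fun _ => b - a) t := by
    ext t
    by_cases h : t ≤ l <;> simp [h]
  rw [hind, integral_add (integrable_const _) ((integrable_const _).indicator measurableSet_Iic),
    integral_indicator_const _ measurableSet_Iic, setIntegral_const,
    measureReal_restrict_apply measurableSet_Iic, Set.Iic_inter_Ioc_of_le h1,
    Real.volume_real_Ioc_of_le h0, Real.volume_real_Ioc_of_le zero_le_one, smul_eq_mul,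
    smul_eq_mul]
  ring

theorem exists_threshold_sum_ite_le {ι : Type*} [Fintype ι] {lam : ι → ℝ}
    (h0 : ∀ i, 0 ≤ lam i) (h1 : ∀ i, lam i ≤ 1) (a b : ι → ℝ) :
    ∃ t : ℝ, ∑ i, (if t ≤ lam i then b i else a i) ≤ ∑ i, ((1 - lam i) * a i + lam i * b i) := by
  have : IsProbabilityMeasure (volume.restrict (Set.Ioc (0 : ℝ) 1)) := ⟨by simp⟩
  have hint : ∀ i, Integrable (fun t : ℝ => if t ≤ lam i then b i else a i)
      (volume.restrict (Set.Ioc 0 1)) := fun i =>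
    Integrable.piecewise (s := Set.Iic (lam i)) measurableSet_Iic (integrable_const _).integrableOn
      (integrable_const _).integrableOn
  obtain ⟨t, ht⟩ := exists_le_integral (integrable_finsetSum Finset.univ fun i _ => hint i)
  refine ⟨t, ht.trans_eq ?_⟩
  rw [integral_finsetSum Finset.univ fun i _ => hint i]
  exact Finset.sum_congr rfl fun i _ => integral_Ioc_zero_one_ite_le (h0 i) (h1 i) _ _

def ConvexOnNodes {ι : Type*} [Preorder ι] (o c : ι → ℝ) : Prop :=
  ∀ j₁ j₂ j₃, j₁ < j₂ → j₂ < j₃ → ∀ t : ℝ, 0 ≤ t → t ≤ 1 →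
    o j₂ = t * o j₁ + (1 - t) * o j₃ → c j₂ ≤ t * c j₁ + (1 - t) * c j₃

theorem ConvexOnNodes.mul_le_add_mul {ι : Type*} [Preorder ι] {o c : ι → ℝ}
    (hc : ConvexOnNodes o c) (ho : StrictMono o) {j₁ j₂ j₃ : ι} (h₁₂ : j₁ < j₂) (h₂₃ : j₂ < j₃) :
    (o j₃ - o j₁) * c j₂ ≤ (o j₃ - o j₂) * c j₁ + (o j₂ - o j₁) * c j₃ := by
  have hd : 0 < o j₃ - o j₁ := sub_pos.2 (ho (h₁₂.trans h₂₃))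
  have key := hc j₁ j₂ j₃ h₁₂ h₂₃ ((o j₃ - o j₂) / (o j₃ - o j₁))
    (div_nonneg (sub_nonneg.2 (ho h₂₃).le) hd.le) ((div_le_one hd).2 (by linarith [ho h₁₂]))
    (by field_simp; ring)
  calc (o j₃ - o j₁) * c j₂
      ≤ (o j₃ - o j₁) * ((o j₃ - o j₂) / (o j₃ - o j₁) * c j₁
          + (1 - (o j₃ - o j₂) / (o j₃ - o j₁)) * c j₃) := mul_le_mul_of_nonneg_left key hd.le
    _ = (o j₃ - o j₂) * c j₁ + (o j₂ - o j₁) * c j₃ := by field_simp; ring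

theorem sum_mul_mul_sub {ι : Type*} [Fintype ι] {p : ι → ℝ} (hp : ∑ j, p j = 1)
    (a x : ℝ) (f : ι → ℝ) : ∑ j, p j * (a * (f j - x)) = a * (∑ j, p j * f j - x) := by
  calc ∑ j, p j * (a * (f j - x)) = a * ∑ j, p j * f j - a * x * ∑ j, p j := by
        simp only [Finset.mul_sum, ← Finset.sum_sub_distrib]
        exact Finset.sum_congr rfl fun j _ => by ring
    _ = a * (∑ j, p j * f j - x) := by rw [hp]; ring

noncomputable section Cells

variable {n : ℕ} {o : Fin (n + 2) → ℝ}

theorem ConvexOnNodes.slope_mul_le {c : Fin (n + 2) → ℝ} (hc : ConvexOnNodes o c)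
    (ho : StrictMono o) (k : Fin (n + 1)) (j : Fin (n + 2)) :
    (c k.succ - c k.castSucc) * (o j - o k.castSucc) ≤
      (o k.succ - o k.castSucc) * (c j - c k.castSucc) := by
  rcases lt_trichotomy j k.castSucc with hj | rfl | hj
  · linarith [hc.mul_le_add_mul ho hj Fin.castSucc_lt_succ]
  · simp
  · rcases (Fin.castSucc_lt_iff_succ_le.1 hj).eq_or_lt with rfl | hj
    · linarith
    · linarith [hc.mul_le_add_mul ho Fin.castSucc_lt_succ hj]

theorem ConvexOnNodes.interpolation_le_sum_mul {c : Fin (n + 2) → ℝ} (hc : ConvexOnNodes o c)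
    (ho : StrictMono o) (k : Fin (n + 1)) {p : Fin (n + 2) → ℝ} (hp0 : ∀ j, 0 ≤ p j)
    (hp1 : ∑ j, p j = 1) :
    let w := (∑ j, p j * o j - o k.castSucc) / (o k.succ - o k.castSucc)
    (1 - w) * c k.castSucc + w * c k.succ ≤ ∑ j, p j * c j := by
  intro w
  have hd : 0 < o k.succ - o k.castSucc := sub_pos.2 (ho Fin.castSucc_lt_succ)
  have hsum := Finset.sum_le_sum fun j (_ : j ∈ Finset.univ) =>
    mul_le_mul_of_nonneg_left (hc.slope_mul_le ho k j) (hp0 j)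
  rw [sum_mul_mul_sub hp1, sum_mul_mul_sub hp1] at hsum
  have hw : w * (c k.succ - c k.castSucc) ≤ ∑ j, p j * c j - c k.castSucc := by
    rw [div_mul_eq_mul_div, div_le_iff₀ hd]
    linarith
  linarith

/-- Cell `k` is the segment `[o k.castSucc, o k.succ]`; `cellOf o v` is the last cell starting at or
below `v` (junk value `0` when `v < o 0`). -/
def cellOf (o : Fin (n + 2) → ℝ) (v : ℝ) : Fin (n + 1) :=
  (Finset.univ.filter fun k : Fin (n + 1) => o k.castSucc ≤ v).sup id

theorem le_cellOf {v : ℝ} {k : Fin (n + 1)} (hk : o k.castSucc ≤ v) : k ≤ cellOf o v :=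
  Finset.le_sup (f := id) (Finset.mem_filter.2 ⟨Finset.mem_univ _, hk⟩)

theorem cellOf_mono (o : Fin (n + 2) → ℝ) : Monotone (cellOf o) := fun _ _ hvw =>
  Finset.sup_mono fun _ hk => Finset.mem_filter.2
    ⟨Finset.mem_univ _, (Finset.mem_filter.1 hk).2.trans hvw⟩

theorem apply_castSucc_cellOf_le {v : ℝ} (hv : o 0 ≤ v) : o (cellOf o v).castSucc ≤ v := by
  unfold cellOf
  obtain ⟨k, hk, hsup⟩ := Finset.exists_mem_eq_sup
    (Finset.univ.filter fun k : Fin (n + 1) => o k.castSucc ≤ v) ⟨0, by simpa using hv⟩ id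
  rw [hsup]
  exact (Finset.mem_filter.1 hk).2

theorem le_apply_succ_cellOf {v : ℝ} (hv : v ≤ o (Fin.last _)) :
    v ≤ o (cellOf o v).succ := by
  by_contra! h
  have hne : (cellOf o v).succ ≠ Fin.last (n + 1) := fun he => by rw [he] at h; linarith
  obtain ⟨k, hk⟩ := Fin.exists_castSucc_eq.2 hne
  have hle : k ≤ cellOf o v := le_cellOf (by rw [hk]; exact h.le)
  exact (Fin.castSucc_lt_succ.trans_eq hk.symm).not_ge (Fin.castSucc_le_castSucc_iff.2 hle)

def cellWeight (o : Fin (n + 2) → ℝ) (v : ℝ) : ℝ :=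
  (v - o (cellOf o v).castSucc) / (o (cellOf o v).succ - o (cellOf o v).castSucc)

theorem cellWeight_mem_Icc (ho : StrictMono o) {v : ℝ} (hv : v ∈ Set.Icc (o 0) (o (Fin.last _))) :
    cellWeight o v ∈ Set.Icc 0 1 := by
  have hd : 0 < o (cellOf o v).succ - o (cellOf o v).castSucc := sub_pos.2 (ho Fin.castSucc_lt_succ)
  refine ⟨div_nonneg (sub_nonneg.2 (apply_castSucc_cellOf_le hv.1)) hd.le, (div_le_one hd).2 ?_⟩
  linarith [le_apply_succ_cellOf hv.2]

def roundAt (o : Fin (n + 2) → ℝ) (t v : ℝ) : Fin (n + 2) :=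
  if t ≤ cellWeight o v then (cellOf o v).succ else (cellOf o v).castSucc

theorem castSucc_cellOf_le_roundAt (t v : ℝ) : (cellOf o v).castSucc ≤ roundAt o t v := by
  unfold roundAt; split_ifs
  exacts [Fin.castSucc_lt_succ.le, le_rfl]

theorem roundAt_le_succ_cellOf (t v : ℝ) : roundAt o t v ≤ (cellOf o v).succ := by
  unfold roundAt; split_ifs
  exacts [le_rfl, Fin.castSucc_lt_succ.le]

theorem roundAt_mono (ho : StrictMono o) (t : ℝ) : Monotone (roundAt o t) := by
  intro v w hvw
  rcases (cellOf_mono o hvw).eq_or_lt with heq | hlt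
  · have hweight : cellWeight o v ≤ cellWeight o w := by
      unfold cellWeight
      rw [heq]
      exact div_le_div_of_nonneg_right (by linarith) (sub_nonneg.2 (ho Fin.castSucc_lt_succ).le)
    unfold roundAt
    rw [heq]
    split_ifs with hv hw
    exacts [le_rfl, absurd (hv.trans hweight) hw, Fin.castSucc_lt_succ.le, le_rfl]
  · exact (roundAt_le_succ_cellOf t v).trans
      ((Fin.succ_le_castSucc_iff.2 hlt).trans (castSucc_cellOf_le_roundAt t w))

end Cells

theorem exists_threshold_cost_le {Θ : Type*} [Fintype Θ] {n : ℕ} {o : Fin (n + 2) → ℝ}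
    (ho : StrictMono o) {c : Θ → Fin (n + 2) → ℝ} (hc : ∀ i, ConvexOnNodes o (c i))
    {p : Θ → Fin (n + 2) → ℝ} (hp0 : ∀ i j, 0 ≤ p i j) (hp1 : ∀ i, ∑ j, p i j = 1) :
    ∃ t, ∑ i, c i (roundAt o t (∑ j, p i j * o j)) ≤ ∑ i, ∑ j, p i j * c i j := by
  have hmean : ∀ i, ∑ j, p i j * o j ∈ Set.Icc (o 0) (o (Fin.last _)) := fun i =>
    (convex_Icc _ _).sum_mem (fun j _ => hp0 i j) (hp1 i) fun j _ =>
      ⟨ho.monotone (Fin.zero_le j), ho.monotone (Fin.le_last j)⟩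
  obtain ⟨t, ht⟩ := exists_threshold_sum_ite_le
    (fun i => (cellWeight_mem_Icc ho (hmean i)).1) (fun i => (cellWeight_mem_Icc ho (hmean i)).2)
    (fun i => c i (cellOf o (∑ j, p i j * o j)).castSucc)
    (fun i => c i (cellOf o (∑ j, p i j * o j)).succ)
  refine ⟨t, ?_⟩
  calc ∑ i, c i (roundAt o t (∑ j, p i j * o j))
      = ∑ i, (if t ≤ cellWeight o (∑ j, p i j * o j) then c i (cellOf o (∑ j, p i j * o j)).succ
          else c i (cellOf o (∑ j, p i j * o j)).castSucc) :=
        Finset.sum_congr rfl fun i _ => apply_ite (c i) _ _ _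
    _ ≤ _ := ht
    _ ≤ ∑ i, ∑ j, p i j * c i j := Finset.sum_le_sum fun i _ =>
        (hc i).interpolation_le_sum_mul ho _ (hp0 i) (hp1 i)

theorem exists_truthful_deterministic_cost_le {Θ : Type*} [Fintype Θ] {m : ℕ} (hm : 0 < m)
    (R : Θ → Θ → Prop) {o : Fin m → ℝ} (ho : StrictMono o) {c : Θ → Fin m → ℝ}
    (hc : ∀ i, ConvexOnNodes o (c i)) {p : Θ → Fin m → ℝ} (hp0 : ∀ i j, 0 ≤ p i j)
    (hp1 : ∀ i, ∑ j, p i j = 1)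
    (hpt : ∀ i₁ i₂, R i₁ i₂ → ∑ j, p i₂ j * o j ≤ ∑ j, p i₁ j * o j) :
    ∃ N : Θ → Fin m, (∀ i₁ i₂, R i₁ i₂ → o (N i₂) ≤ o (N i₁)) ∧
      ∑ i, c i (N i) ≤ ∑ i, ∑ j, p i j * c i j := by
  obtain _ | _ | n := m
  · exact absurd hm (lt_irrefl 0)
  · refine ⟨fun _ => 0, fun _ _ _ => le_rfl, le_of_eq ?_⟩
    simp only [Fin.sum_univ_succ, Finset.univ_eq_empty, Finset.sum_empty, add_zero] at hp1 ⊢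
    simp [hp1]
  · obtain ⟨t, ht⟩ := exists_threshold_cost_le ho hc hp0 hp1
    exact ⟨fun i => roundAt o t (∑ j, p i j * o j),
      fun i₁ i₂ h => ho.monotone (roundAt_mono ho t (hpt i₁ i₂ h)), ht⟩

open Finset in
theorem optimal_deterministic_exists_of_convex_costs_general
    {Θ : Type*} [Fintype Θ] {m : ℕ} (hm : 0 < m)
    (R : Θ → Θ → Prop)
    (o : Fin m → ℝ) (ho : StrictMono o)
    (c : Θ → Fin m → ℝ)
    -- convexity of the piecewise-linear extension of each c_i
    (hconv : ∀ i, ∀ j₁ j₂ j₃ : Fin m, j₁ < j₂ → j₂ < j₃ →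
      ∀ t : ℝ, 0 ≤ t → t ≤ 1 → o j₂ = t * o j₁ + (1 - t) * o j₃ →
        c i j₂ ≤ t * c i j₁ + (1 - t) * c i j₃) :
    ∃ M : Θ → Fin m,
      (∀ i₁ i₂, R i₁ i₂ → o (M i₁) ≥ o (M i₂)) ∧
      ∀ p : Θ → Fin m → ℝ,
        (∀ i j, 0 ≤ p i j) →
        (∀ i, ∑ j, p i j = 1) →
        (∀ i₁ i₂, R i₁ i₂ → ∑ j, p i₁ j * o j ≥ ∑ j, p i₂ j * o j) →
        ∑ i, c i (M i) ≤ ∑ i, ∑ j, p i j * c i j := by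
  classical
  obtain ⟨M, hM, hMmin⟩ := exists_min_image
    (univ.filter fun M : Θ → Fin m => ∀ i₁ i₂, R i₁ i₂ → o (M i₁) ≥ o (M i₂))
    (fun M => ∑ i, c i (M i)) ⟨fun _ => ⟨0, hm⟩, by simp⟩
  refine ⟨M, (mem_filter.1 hM).2, fun p hp0 hp1 hpt => ?_⟩
  obtain ⟨N, hN, hcost⟩ := exists_truthful_deterministic_cost_le hm R ho hconv hp0 hp1 hpt
  exact (hMmin N (mem_filter.2 ⟨mem_univ _, hN⟩)).trans hcost

open Finset in
theorem optimal_deterministic_exists_of_convex_costs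
    {Θ : Type*} [Fintype Θ] {m : ℕ} (hm : 0 < m)
    (R : Θ → Θ → Prop) (hR : ∀ i, R i i)
    (o : Fin m → ℝ) (ho : StrictMono o) (ho0 : ∀ j, 0 ≤ o j)
    (c : Θ → Fin m → ℝ) (hc0 : ∀ i j, 0 ≤ c i j)
    -- convexity of the piecewise-linear extension of each c_i
    (hconv : ∀ i, ∀ j₁ j₂ j₃ : Fin m, j₁ < j₂ → j₂ < j₃ →
      ∀ t : ℝ, 0 ≤ t → t ≤ 1 → o j₂ = t * o j₁ + (1 - t) * o j₃ →
        c i j₂ ≤ t * c i j₁ + (1 - t) * c i j₃) :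
    ∃ M : Θ → Fin m,
      (∀ i₁ i₂, R i₁ i₂ → o (M i₁) ≥ o (M i₂)) ∧
      ∀ p : Θ → Fin m → ℝ,
        (∀ i j, 0 ≤ p i j) →
        (∀ i, ∑ j, p i j = 1) →
        (∀ i₁ i₂, R i₁ i₂ → ∑ j, p i₁ j * o j ≥ ∑ j, p i₂ j * o j) →
        ∑ i, c i (M i) ≤ ∑ i, ∑ j, p i j * c i j :=
  optimal_deterministic_exists_of_convex_costs_general hm R o ho c hconv
end

section
/- Let Θ be a finite set, and let M be a random subset of Θ whose support is a chain (any two support sets are nested). If some set O in the support does not contain an element i₀ of maximal marginal probability u_{i₀} = max_i Pr[i ∈ M], and O is nonempty, then for every i ∈ O, Pr[i ∈ M] ≥ Pr[O] + u_{i₀}, contradicting maximality; hence every nonempty support set contains all elements of maximal marginal probability. Formally: if the support of M is a chain and Pr[M = O] > 0 with i₀ ∉ O and O ≠ ∅, then u_i > u_{i₀} for all i ∈ O. -/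
open Finset in
theorem chain_support_contains_max_marginal
    {Θ : Type*} [Fintype Θ] [DecidableEq Θ]
    (μ : Finset Θ → ℝ)
    (hμ0 : ∀ A, 0 ≤ μ A) (hμ1 : ∑ A : Finset Θ, μ A = 1)
    (hchain : ∀ A B, 0 < μ A → 0 < μ B → A ⊆ B ∨ B ⊆ A)
    (u : Θ → ℝ)
    (hu : ∀ i, u i = ∑ A : Finset Θ, if i ∈ A then μ A else 0)
    (O : Finset Θ) (i₀ : Θ)
    (hO : 0 < μ O) (hi₀ : i₀ ∉ O) (hne : O.Nonempty) :
    ∀ i ∈ O, u i > u i₀ := by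
  intro i hi
  have key : ∀ A : Finset Θ, (if i₀ ∈ A then μ A else 0) + (if A = O then μ A else 0)
      ≤ (if i ∈ A then μ A else 0) := by
    intro A
    by_cases hA : A = O
    · subst hA; simp [hi₀, hi]
    · rcases eq_or_lt_of_le (hμ0 A) with h0 | hpos
      · split_ifs <;> simp [← h0]
      · by_cases hiA : i₀ ∈ A
        · have hOA : O ⊆ A := by
            rcases hchain A O hpos hO with h | h
            · exact absurd (h hiA) hi₀
            · exact h
          simp [hiA, hA, hOA hi]
        · simp only [hiA, hA, if_false, add_zero]
          split_ifs
          · exact hμ0 A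
          · exact le_refl 0
  have hsum := Finset.sum_le_sum (fun A (_ : A ∈ Finset.univ) => key A)
  rw [Finset.sum_add_distrib] at hsum
  have hO' : ∑ A : Finset Θ, (if A = O then μ A else 0) = μ O := by
    rw [Finset.sum_ite_eq' Finset.univ O μ]; simp
  rw [hO'] at hsum
  rw [hu i, hu i₀]
  linarith
end

section
/- Submodular derandomization step: let Θ be a finite set, c : Set Θ → ℝ submodular (c(A) + c(B) ≥ c(A ∩ B) + c(A ∪ B)), and let p be a probability distribution over subsets of Θ. If A, B are two crossing sets (A ⊄ B, B ⊄ A) with p(A) ≥ p(B) = q > 0, then modifying p by decreasing p(A), p(B) by q and increasing p(A ∩ B), p(A ∪ B) by q yields a distribution p' with: (1) the same marginals Pr[i ∈ S] for every i ∈ Θ, (2) expected cost E_{p'}[c] ≤ E_p[c], and (3) strictly larger potential ∑_S p(S)|S|². -/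
open Finset in
theorem submodular_uncrossing_step
    {Θ : Type*} [Fintype Θ] [DecidableEq Θ]
    (c : Finset Θ → ℝ)
    (hsub : ∀ A B : Finset Θ, c A + c B ≥ c (A ∩ B) + c (A ∪ B))
    (p : Finset Θ → ℝ)
    (hp0 : ∀ S, 0 ≤ p S) (hp1 : ∑ S : Finset Θ, p S = 1)
    (A B : Finset Θ) (hAB : ¬ A ⊆ B) (hBA : ¬ B ⊆ A)
    (q : ℝ) (hq : q = p B) (hqpos : 0 < q) (hpAB : p A ≥ p B) :
    ∀ p' : Finset Θ → ℝ,
      (∀ S, p' S = p S + (if S = A ∩ B then q else 0) + (if S = A ∪ B then q else 0)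
        - (if S = A then q else 0) - (if S = B then q else 0)) →
      (∀ S, 0 ≤ p' S) ∧ (∑ S : Finset Θ, p' S = 1) ∧
      (∀ i : Θ, (∑ S : Finset Θ, if i ∈ S then p' S else 0)
        = ∑ S : Finset Θ, if i ∈ S then p S else 0) ∧
      (∑ S : Finset Θ, p' S * c S ≤ ∑ S : Finset Θ, p S * c S) ∧
      (∑ S : Finset Θ, p' S * (S.card : ℝ) ^ 2 > ∑ S : Finset Θ, p S * (S.card : ℝ) ^ 2) := by
  intro p' hp'
  -- distinctness facts
  have hIA : A ∩ B ≠ A := fun h => hAB (Finset.inter_eq_left.mp h)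
  have hIB : A ∩ B ≠ B := fun h => hBA (Finset.inter_eq_right.mp h)
  have hUA : A ∪ B ≠ A := fun h => hBA (Finset.union_eq_left.mp h)
  have hUB : A ∪ B ≠ B := fun h => hAB (Finset.union_eq_right.mp h)
  have hIU : A ∩ B ≠ A ∪ B := by
    intro h
    have : A ⊆ B := by
      have h1 : A ⊆ A ∪ B := Finset.subset_union_left
      rw [← h] at h1
      exact (Finset.subset_inter_iff.mp h1).2
    exact hAB this
  have hABne : A ≠ B := fun h => hAB (h ▸ Finset.Subset.refl A)
  -- key identity for any f
  have key : ∀ f : Finset Θ → ℝ, ∑ S : Finset Θ, p' S * f S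
      = (∑ S : Finset Θ, p S * f S) + q * f (A ∩ B) + q * f (A ∪ B) - q * f A - q * f B := by
    intro f
    have h1 : ∀ S : Finset Θ, p' S * f S = p S * f S
        + (if S = A ∩ B then q * f S else 0) + (if S = A ∪ B then q * f S else 0)
        - (if S = A then q * f S else 0) - (if S = B then q * f S else 0) := by
      intro S
      rw [hp' S]
      split_ifs <;> ring
    simp only [h1]
    rw [Finset.sum_sub_distrib, Finset.sum_sub_distrib, Finset.sum_add_distrib,
      Finset.sum_add_distrib]
    simp [Finset.sum_ite_eq']
  refine ⟨?_, ?_, ?_, ?_, ?_⟩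
  · -- nonnegativity
    intro S
    rw [hp' S]
    by_cases h1 : S = A ∩ B
    · subst h1; simp [hIU, hIA, hIB]; linarith [hp0 (A ∩ B)]
    · by_cases h2 : S = A ∪ B
      · subst h2; simp [hIU.symm, hUA, hUB]; linarith [hp0 (A ∪ B)]
      · by_cases h3 : S = A
        · subst h3; simp [h1, h2, hABne]; linarith [hp0 S]
        · by_cases h4 : S = B
          · subst h4; simp [h1, h2, h3]; linarith
          · simp [h1, h2, h3, h4]; exact hp0 S
  · -- sums to 1
    have h := key (fun _ => 1)
    simp only [mul_one] at h
    rw [h, hp1]; ring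
  · -- marginals
    intro i
    have h2 : ∀ (r : Finset Θ → ℝ), (∑ S : Finset Θ, if i ∈ S then r S else 0)
        = ∑ S : Finset Θ, r S * (if i ∈ S then (1:ℝ) else 0) := by
      intro r
      apply Finset.sum_congr rfl
      intro S _
      split_ifs <;> ring
    rw [h2 p', h2 p, key (fun S => if i ∈ S then (1:ℝ) else 0)]
    have : (if i ∈ A ∩ B then (1:ℝ) else 0) + (if i ∈ A ∪ B then (1:ℝ) else 0)
        = (if i ∈ A then (1:ℝ) else 0) + (if i ∈ B then (1:ℝ) else 0) := by
      simp only [Finset.mem_inter, Finset.mem_union]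
      by_cases hA : i ∈ A <;> by_cases hB : i ∈ B <;> simp [hA, hB]
    linear_combination q * this
  · -- cost decreases
    rw [key c]
    have := hsub A B
    nlinarith
  · -- potential increases
    rw [key (fun S => (S.card : ℝ) ^ 2)]
    have hcard : (A ∩ B).card + (A ∪ B).card = A.card + B.card :=
      Finset.card_inter_add_card_union A B
    have hIAlt : (A ∩ B).card < A.card :=
      Finset.card_lt_card ⟨Finset.inter_subset_left, fun h => hIA (Finset.Subset.antisymm Finset.inter_subset_left h)⟩
    have hIBlt : (A ∩ B).card < B.card :=
      Finset.card_lt_card ⟨Finset.inter_subset_right, fun h => hIB (Finset.Subset.antisymm Finset.inter_subset_right h)⟩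
    have hc : ((A ∩ B).card : ℝ) + ((A ∪ B).card : ℝ) = (A.card : ℝ) + (B.card : ℝ) := by
      exact_mod_cast congrArg (Nat.cast : ℕ → ℝ) hcard
    have h1 : ((A ∩ B).card : ℝ) < (A.card : ℝ) := by exact_mod_cast hIAlt
    have h2 : ((A ∩ B).card : ℝ) < (B.card : ℝ) := by exact_mod_cast hIBlt
    have hn2 : ((A ∪ B).card : ℝ) = (A.card : ℝ) + (B.card : ℝ) - ((A ∩ B).card : ℝ) := by
      linarith
    rw [hn2]
    nlinarith [mul_pos hqpos (mul_pos (sub_pos.mpr h1) (sub_pos.mpr h2))]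
end

section
/- When the outcome space is binary (|O| = 2), the relation R is reflexive, and the principal's combinatorial cost function c : Set Θ → ℝ₊ is submodular, there exists an optimal truthful mechanism that is deterministic: the minimum over randomized truthful mechanisms M (random subsets of Θ, truthful meaning Pr[i₁ ∈ M] ≥ Pr[i₂ ∈ M] for all (i₁,i₂) ∈ R) of E[c(M)] is achieved by a deterministic truthful subset S ⊆ Θ, i.e. one with (i₁,i₂) ∈ R → (i₂ ∈ S → i₁ ∈ S). -/
open Finset

/-- Abel summation identity used below. -/
private lemma abel_aux (y g : ℕ → ℝ) (n : ℕ) :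
    ∑ k ∈ Finset.range (n+1), (y k - y (k+1)) * g k + y (n+1) * g n
      = y 0 * g 0 + ∑ j ∈ Finset.range n, y (j+1) * (g (j+1) - g j) := by
  induction n with
  | zero => simp; ring
  | succ n ih =>
      rw [Finset.sum_range_succ (f := fun k => (y k - y (k+1)) * g k),
        Finset.sum_range_succ (f := fun j => y (j+1) * (g (j+1) - g j))]
      linear_combination ih

open Finset in
theorem binary_submodular_deterministic_optimal
    {Θ : Type*} [Fintype Θ] [DecidableEq Θ]
    (R : Θ → Θ → Prop) (hR : ∀ i, R i i)
    (c : Finset Θ → ℝ) (hc0 : ∀ A, 0 ≤ c A)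
    (hsub : ∀ A B : Finset Θ, c A + c B ≥ c (A ∩ B) + c (A ∪ B)) :
    ∃ S : Finset Θ,
      (∀ i₁ i₂, R i₁ i₂ → i₂ ∈ S → i₁ ∈ S) ∧
      ∀ μ : Finset Θ → ℝ,
        (∀ A, 0 ≤ μ A) → (∑ A : Finset Θ, μ A = 1) →
        (∀ i₁ i₂, R i₁ i₂ →
          (∑ A : Finset Θ, if i₁ ∈ A then μ A else 0) ≥
            ∑ A : Finset Θ, if i₂ ∈ A then μ A else 0) →
        c S ≤ ∑ A : Finset Θ, μ A * c A := by
  classical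
  -- the family of truthful ("downward closed under R") sets
  set F : Finset (Finset Θ) :=
    (univ : Finset (Finset Θ)).filter (fun T => ∀ i₁ i₂, R i₁ i₂ → i₂ ∈ T → i₁ ∈ T) with hF
  have hFne : F.Nonempty := ⟨univ, by simp [hF]⟩
  obtain ⟨S, hSmem, hSmin⟩ := Finset.exists_min_image F c hFne
  have hStruth : ∀ i₁ i₂, R i₁ i₂ → i₂ ∈ S → i₁ ∈ S := by
    have := (Finset.mem_filter.mp hSmem).2
    simpa using this
  refine ⟨S, hStruth, ?_⟩
  intro μ hμ0 hμ1 hμR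
  set n := Fintype.card Θ with hn
  set x : Θ → ℝ := fun i => ∑ A : Finset Θ, if i ∈ A then μ A else 0 with hx
  have hx0 : ∀ i, 0 ≤ x i := by
    intro i
    refine Finset.sum_nonneg fun A _ => ?_
    split
    · exact hμ0 A
    · exact le_rfl
  have hx1 : ∀ i, x i ≤ 1 := by
    intro i
    have hle : x i ≤ ∑ A : Finset Θ, μ A := by
      refine Finset.sum_le_sum fun A _ => ?_
      split
      · exact le_rfl
      · exact hμ0 A
    rw [hμ1] at hle
    exact hle
  have hxR : ∀ i₁ i₂, R i₁ i₂ → x i₂ ≤ x i₁ := fun i₁ i₂ h => hμR i₁ i₂ h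
  -- sort Θ in decreasing order of x
  set e₁ : Fin n ≃ Θ := (Fintype.equivFin Θ).symm with he₁
  set σ : Equiv.Perm (Fin n) := Tuple.sort (fun j => x (e₁ j)) with hσ
  set e : Fin n ≃ Θ := (Fin.revPerm.trans σ).trans e₁ with he
  have hanti : ∀ j j' : Fin n, j ≤ j' → x (e j') ≤ x (e j) := by
    intro j j' hjj
    have := Tuple.monotone_sort (fun j => x (e₁ j)) (Fin.rev_le_rev.mpr hjj)
    simpa [he, Function.comp] using this
  -- prefixes
  set P : ℕ → Finset Θ := fun k => univ.filter (fun i => ((e.symm i : Fin n) : ℕ) < k) with hP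
  have hPmem : ∀ (i : Θ) (k : ℕ), i ∈ P k ↔ ((e.symm i : Fin n) : ℕ) < k := by
    intro i k; simp [hP]
  have hP0 : P 0 = ∅ := by ext i; simp [hPmem]
  have hPn : P n = univ := by
    ext i; simpa [hPmem] using (e.symm i).isLt
  have hPsucc : ∀ (k : ℕ) (hk : k < n), P (k+1) = insert (e ⟨k, hk⟩) (P k) := by
    intro k hk
    ext i
    simp only [hPmem, Finset.mem_insert, Nat.lt_succ_iff_lt_or_eq]
    constructor
    · rintro (h | h)
      · exact Or.inr h
      · left
        have h2 : e.symm i = ⟨k, hk⟩ := Fin.ext h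
        rw [← h2, Equiv.apply_symm_apply]
    · rintro (h | h)
      · right; rw [h, Equiv.symm_apply_apply]
      · exact Or.inl h
  -- greedy weights
  set w : ℕ → ℝ := fun k => c (P (k+1)) - c (P k) with hw
  set Q : ℕ → Finset (Fin n) := fun k => univ.filter (fun j : Fin n => j.val < k) with hQ
  -- greedy lemma: the greedy vector is in the submodular polyhedron
  have greedy : ∀ k : ℕ, k ≤ n → ∀ A : Finset Θ, A ⊆ P k →
      c ∅ + ∑ j ∈ Q k, (if e j ∈ A then w j.val else 0) ≤ c A := by
    intro k
    induction k with
    | zero =>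
        intro _ A hA
        have hAe : A = ∅ := Finset.subset_empty.mp (hP0 ▸ hA)
        have hQe : Q 0 = ∅ := by
          ext j; simp [hQ]
        simp [hAe, hQe]
    | succ k ih =>
        intro hk A hA
        have hkn : k < n := Nat.lt_of_succ_le hk
        have hkn' : k ≤ n := le_of_lt hkn
        set t : Θ := e ⟨k, hkn⟩ with ht
        have hfilter : Q (k + 1) = insert (⟨k, hkn⟩ : Fin n) (Q k) := by
          ext j
          simp only [hQ, Finset.mem_filter, Finset.mem_insert, Finset.mem_univ, true_and,
            Nat.lt_succ_iff_lt_or_eq]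
          constructor
          · rintro (h | h)
            · exact Or.inr h
            · exact Or.inl (Fin.ext h)
          · rintro (h | h)
            · right; rw [h]
            · exact Or.inl h
        have hknotin : (⟨k, hkn⟩ : Fin n) ∉ Q k := by
          simp [hQ]
        rw [hfilter, Finset.sum_insert hknotin]
        by_cases htA : t ∈ A
        · -- t ∈ A : use submodularity
          set A' : Finset Θ := A.erase t with hA'
          have hA'sub : A' ⊆ P k := by
            intro i hi
            obtain ⟨hit, hiA⟩ := Finset.mem_erase.mp hi
            have := (hPmem i (k+1)).mp (hA hiA)
            rcases Nat.lt_succ_iff_lt_or_eq.mp this with h | h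
            · exact (hPmem i k).mpr h
            · exfalso
              apply hit
              have : e.symm i = ⟨k, hkn⟩ := Fin.ext h
              rw [ht, ← this, Equiv.apply_symm_apply]
          have hih := ih hkn' A' hA'sub
          have hsame : ∀ j ∈ Q k,
              (if e j ∈ A then w j.val else 0) = (if e j ∈ A' then w j.val else 0) := by
            intro j hj
            have hjk : (j : ℕ) < k := by
              rw [hQ] at hj
              exact (Finset.mem_filter.mp hj).2
            have hjt : e j ≠ t := by
              intro hcontra
              have : j = ⟨k, hkn⟩ := e.injective (by rw [hcontra])
              rw [this] at hjk
              exact absurd hjk (lt_irrefl k)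
            simp [hA', Finset.mem_erase, hjt]
          rw [Finset.sum_congr rfl hsame]
          -- submodularity: c A + c (P k) ≥ c A' + c (P (k+1))
          have hcap : A ∩ P k = A' := by
            ext i
            simp only [Finset.mem_inter, hA', Finset.mem_erase]
            constructor
            · rintro ⟨hiA, hiP⟩
              refine ⟨?_, hiA⟩
              intro hcontra
              have := (hPmem i k).mp hiP
              rw [hcontra, ht, Equiv.symm_apply_apply] at this
              exact absurd this (lt_irrefl k)
            · rintro ⟨hit, hiA⟩
              refine ⟨hiA, ?_⟩
              have := (hPmem i (k+1)).mp (hA hiA)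
              rcases Nat.lt_succ_iff_lt_or_eq.mp this with h | h
              · exact (hPmem i k).mpr h
              · exfalso
                apply hit
                have : e.symm i = ⟨k, hkn⟩ := Fin.ext h
                rw [ht, ← this, Equiv.apply_symm_apply]
          have hcup : A ∪ P k = P (k+1) := by
            apply Finset.Subset.antisymm
            · intro i hi
              rcases Finset.mem_union.mp hi with h | h
              · exact hA h
              · exact (hPmem i (k+1)).mpr (Nat.lt_succ_of_lt ((hPmem i k).mp h))
            · intro i hi
              have := (hPmem i (k+1)).mp hi
              rcases Nat.lt_succ_iff_lt_or_eq.mp this with h | h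
              · exact Finset.mem_union.mpr (Or.inr ((hPmem i k).mpr h))
              · apply Finset.mem_union.mpr
                left
                have : e.symm i = ⟨k, hkn⟩ := Fin.ext h
                have : i = t := by rw [ht, ← this, Equiv.apply_symm_apply]
                rw [this]; exact htA
          have hsubm := hsub A (P k)
          rw [hcap, hcup] at hsubm
          have hwk : (if t ∈ A then w k else 0) = w k := by simp [htA]
          rw [hwk]
          simp only [hw] at *
          linarith
        · -- t ∉ A : A ⊆ P k
          have hAsub : A ⊆ P k := by
            intro i hi
            have := (hPmem i (k+1)).mp (hA hi)
            rcases Nat.lt_succ_iff_lt_or_eq.mp this with h | h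
            · exact (hPmem i k).mpr h
            · exfalso
              apply htA
              have : e.symm i = ⟨k, hkn⟩ := Fin.ext h
              have : i = t := by rw [ht, ← this, Equiv.apply_symm_apply]
              rw [← this]; exact hi
          have hih := ih hkn' A hAsub
          have hwk : (if t ∈ A then w k else 0) = 0 := by simp [htA]
          rw [hwk]
          linarith
  -- main inequality step 1: lower bound the expected cost by the greedy linear form
  have h1 : ∀ A : Finset Θ, c ∅ + ∑ j : Fin n, (if e j ∈ A then w j.val else 0) ≤ c A := by
    intro A
    have hfull : Q n = univ := by
      ext j; simpa [hQ] using j.isLt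
    have := greedy n le_rfl A (by rw [hPn]; exact Finset.subset_univ A)
    rwa [hfull] at this
  have h2 : c ∅ + ∑ j : Fin n, x (e j) * w j.val ≤ ∑ A : Finset Θ, μ A * c A := by
    have step1 : ∑ A : Finset Θ, μ A * (c ∅ + ∑ j : Fin n, (if e j ∈ A then w j.val else 0))
        ≤ ∑ A : Finset Θ, μ A * c A :=
      Finset.sum_le_sum fun A _ => mul_le_mul_of_nonneg_left (h1 A) (hμ0 A)
    have step2 : ∑ A : Finset Θ, μ A * (c ∅ + ∑ j : Fin n, (if e j ∈ A then w j.val else 0))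
        = c ∅ + ∑ j : Fin n, x (e j) * w j.val := by
      simp only [mul_add, Finset.sum_add_distrib]
      congr 1
      · rw [← Finset.sum_mul, hμ1, one_mul]
      · calc ∑ A : Finset Θ, μ A * ∑ j : Fin n, (if e j ∈ A then w j.val else 0)
            = ∑ A : Finset Θ, ∑ j : Fin n, ((if e j ∈ A then μ A else 0) * w j.val) := by
              apply Finset.sum_congr rfl
              intro A _
              rw [Finset.mul_sum]
              apply Finset.sum_congr rfl
              intro j _
              by_cases hjA : e j ∈ A <;> simp [hjA]
          _ = ∑ j : Fin n, ∑ A : Finset Θ, ((if e j ∈ A then μ A else 0) * w j.val) :=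
              Finset.sum_comm
          _ = ∑ j : Fin n, x (e j) * w j.val := by
              apply Finset.sum_congr rfl
              intro j _
              rw [← Finset.sum_mul]
    rw [← step2]; exact step1
  -- Abel summation: rewrite the linear form as a convex combination of prefix costs
  set Z : ℕ → ℝ := fun k => if h : k < n then x (e ⟨k, h⟩) else 0 with hZ
  set y : ℕ → ℝ := fun k => if k = 0 then 1 else Z (k - 1) with hy
  have hy0 : y 0 = 1 := by simp [hy]
  have hysucc : ∀ k : ℕ, y (k+1) = Z k := by intro k; simp [hy]
  have hZn : Z n = 0 := by simp [hZ]
  have hZle1 : ∀ k, Z k ≤ 1 := by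
    intro k
    simp only [hZ]
    split
    · exact hx1 _
    · exact zero_le_one
  have hZanti : ∀ a b : ℕ, a ≤ b → Z b ≤ Z a := by
    intro a b hab
    simp only [hZ]
    by_cases hb : b < n
    · have ha : a < n := lt_of_le_of_lt hab hb
      rw [dif_pos hb, dif_pos ha]
      exact hanti ⟨a, ha⟩ ⟨b, hb⟩ (Fin.mk_le_mk.mpr hab)
    · rw [dif_neg hb]
      split
      · exact hx0 _
      · exact le_rfl
  have h3 : ∑ j : Fin n, x (e j) * w j.val = ∑ j ∈ Finset.range n, Z j * w j := by
    rw [← Fin.sum_univ_eq_sum_range (fun k => Z k * w k) n]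
    apply Finset.sum_congr rfl
    intro j _
    have hZj : Z (j : ℕ) = x (e j) := by
      simp only [hZ]
      rw [dif_pos j.isLt, Fin.eta]
    rw [hZj]
  have h4 : ∑ k ∈ Finset.range (n+1), (y k - y (k+1)) * c (P k)
      = c ∅ + ∑ j ∈ Finset.range n, Z j * w j := by
    have := abel_aux y (fun k => c (P k)) n
    rw [hysucc n, hZn, zero_mul, add_zero, hy0, hP0, one_mul] at this
    rw [this]
    have h' : ∀ j ∈ Finset.range n, y (j+1) * (c (P (j+1)) - c (P j)) = Z j * w j := by
      intro j _
      rw [hysucc j]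
    rw [Finset.sum_congr rfl h']
  have h5 : ∑ k ∈ Finset.range (n+1), (y k - y (k+1)) = 1 := by
    rw [Finset.sum_range_sub' y (n+1), hy0, hysucc n, hZn, sub_zero]
  have h6 : ∀ k ∈ Finset.range (n+1), 0 ≤ y k - y (k+1) := by
    intro k hk
    rw [sub_nonneg]
    match k with
    | 0 =>
        rw [hy0, hysucc 0]
        exact hZle1 0
    | (m+1) =>
        rw [hysucc m, hysucc (m+1)]
        exact hZanti m (m+1) (Nat.le_succ m)
  have h7 : ∀ k ∈ Finset.range (n+1), y k - y (k+1) ≠ 0 → c S ≤ c (P k) := by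
    intro k hk hne
    have hkn : k ≤ n := Nat.lt_succ_iff.mp (Finset.mem_range.mp hk)
    have hlt : y (k+1) < y k := lt_of_le_of_ne (by linarith [h6 k hk, sub_nonneg.mp (h6 k hk)])
      (fun hcontra => hne (by rw [hcontra]; ring))
    apply hSmin
    rw [hF, Finset.mem_filter]
    refine ⟨Finset.mem_univ _, ?_⟩
    intro i₁ i₂ hr hi₂
    by_contra hi₁
    -- i₁ ∉ P k : (e.symm i₁ : ℕ) ≥ k, hence k < n
    have hq : k ≤ ((e.symm i₁ : Fin n) : ℕ) := le_of_not_gt (fun h => hi₁ ((hPmem i₁ k).mpr h))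
    have hknlt : k < n := lt_of_le_of_lt hq (e.symm i₁).isLt
    have hp : ((e.symm i₂ : Fin n) : ℕ) < k := (hPmem i₂ k).mp hi₂
    -- k ≥ 1
    obtain ⟨m, rfl⟩ : ∃ m, k = m + 1 := ⟨k - 1, by omega⟩
    have hmn : m < n := by omega
    -- x i₁ ≤ Z (m+1)
    have hxi₁ : x i₁ ≤ Z (m+1) := by
      simp only [hZ]
      rw [dif_pos hknlt]
      have : (⟨m+1, hknlt⟩ : Fin n) ≤ e.symm i₁ := by
        rw [Fin.le_def]; exact hq
      have h' := hanti _ _ this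
      rwa [Equiv.apply_symm_apply] at h'
    -- y (m+1) ≤ x i₂
    have hxi₂ : y (m+1) ≤ x i₂ := by
      rw [hysucc m]
      simp only [hZ]
      rw [dif_pos hmn]
      have : e.symm i₂ ≤ (⟨m, hmn⟩ : Fin n) := by
        rw [Fin.le_def]; simpa [Nat.lt_succ_iff] using hp
      have h' := hanti _ _ this
      rwa [Equiv.apply_symm_apply] at h'
    have hRx := hxR i₁ i₂ hr
    rw [hysucc (m+1)] at hlt
    linarith
  -- conclude
  calc c S = (∑ k ∈ Finset.range (n+1), (y k - y (k+1))) * c S := by rw [h5, one_mul]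
    _ = ∑ k ∈ Finset.range (n+1), (y k - y (k+1)) * c S := by rw [Finset.sum_mul]
    _ ≤ ∑ k ∈ Finset.range (n+1), (y k - y (k+1)) * c (P k) := by
        apply Finset.sum_le_sum
        intro k hk
        by_cases hne : y k - y (k+1) = 0
        · rw [hne, zero_mul, zero_mul]
        · exact mul_le_mul_of_nonneg_left (h7 k hk hne) (h6 k hk)
    _ = c ∅ + ∑ j ∈ Finset.range n, Z j * w j := h4
    _ = c ∅ + ∑ j : Fin n, x (e j) * w j.val := by rw [h3]
    _ ≤ ∑ A : Finset Θ, μ A * c A := h2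
end

section
/- Uniqueness of the non-crossing (comonotone) coupling: let Θ be finite, outcomes o₁ < ... < o_m reals, and for each i ∈ Θ let p_{i,·} be a probability distribution over outcomes. Then there is exactly one probability distribution P over outcome vectors (Θ → {o₁,...,o_m}) such that (1) P has marginals p_{i,j} (Pr_{O∼P}[O(i) = o_j] = p_{i,j} for all i, j), and (2) no two vectors in the support of P cross (for any O₁, O₂ in the support, either O₁ ≤ O₂ pointwise or O₂ ≤ O₁ pointwise). -/
open Finset MeasureTheory

set_option linter.unusedSectionVars false

namespace ComonotoneCouplingAux

variable {Θ : Type*} [Fintype Θ] [DecidableEq Θ] {m : ℕ}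

/-- CDF: probability of outcomes `≤ j`. -/
noncomputable def Fc (p : Θ → Fin m → ℝ) (i : Θ) (j : Fin m) : ℝ :=
  ∑ k ∈ Finset.univ.filter (fun k => k ≤ j), p i k

/-- Left CDF: probability of outcomes `< j`. -/
noncomputable def Fl (p : Θ → Fin m → ℝ) (i : Θ) (j : Fin m) : ℝ :=
  ∑ k ∈ Finset.univ.filter (fun k => k < j), p i k

noncomputable def aF (p : Θ → Fin m → ℝ) (O : Θ → Fin m) : ℝ :=
  Finset.univ.fold max 0 (fun i => Fl p i (O i))

noncomputable def bF (p : Θ → Fin m → ℝ) (O : Θ → Fin m) : ℝ :=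
  Finset.univ.fold min 1 (fun i => Fc p i (O i))

/-- The comonotone coupling. -/
noncomputable def R (p : Θ → Fin m → ℝ) (O : Θ → Fin m) : ℝ :=
  max 0 (bF p O - aF p O)

variable {p : Θ → Fin m → ℝ}

lemma Fl_nonneg (hp0 : ∀ i j, 0 ≤ p i j) (i : Θ) (j : Fin m) : 0 ≤ Fl p i j :=
  Finset.sum_nonneg fun k _ => hp0 i k

lemma Fc_le_one (hp0 : ∀ i j, 0 ≤ p i j) (hp1 : ∀ i, ∑ j, p i j = 1) (i : Θ) (j : Fin m) :
    Fc p i j ≤ 1 := by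
  rw [← hp1 i]
  exact Finset.sum_le_sum_of_subset_of_nonneg (Finset.filter_subset _ _)
    (fun k _ _ => hp0 i k)

lemma Fc_le_Fl (hp0 : ∀ i j, 0 ≤ p i j) {i : Θ} {j j' : Fin m} (h : j < j') :
    Fc p i j ≤ Fl p i j' := by
  refine Finset.sum_le_sum_of_subset_of_nonneg ?_ (fun k _ _ => hp0 i k)
  intro k hk
  simp only [Finset.mem_filter, Finset.mem_univ, true_and] at hk ⊢
  exact lt_of_le_of_lt hk h

lemma Fc_eq_Fl_add (i : Θ) (j : Fin m) : Fc p i j = Fl p i j + p i j := by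
  have hins : Finset.univ.filter (fun k => k ≤ j) =
      insert j (Finset.univ.filter (fun k => k < j)) := by
    ext k
    simp only [Finset.mem_filter, Finset.mem_univ, true_and, Finset.mem_insert]
    constructor
    · intro h; rcases eq_or_lt_of_le h with h | h
      · exact Or.inl h
      · exact Or.inr h
    · rintro (rfl | h)
      · exact le_rfl
      · exact h.le
  rw [Fc, hins, Finset.sum_insert (by simp), add_comm, Fl]

lemma Fl_le_aF (i : Θ) (O : Θ → Fin m) : Fl p i (O i) ≤ aF p O :=
  (Finset.le_fold_max _).mpr (Or.inr ⟨i, Finset.mem_univ i, le_rfl⟩)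

lemma aF_nonneg (O : Θ → Fin m) : 0 ≤ aF p O :=
  (Finset.le_fold_max _).mpr (Or.inl le_rfl)

lemma bF_le_Fc (i : Θ) (O : Θ → Fin m) : bF p O ≤ Fc p i (O i) :=
  (Finset.fold_min_le _).mpr (Or.inr ⟨i, Finset.mem_univ i, le_rfl⟩)

lemma bF_le_one (O : Θ → Fin m) : bF p O ≤ 1 :=
  (Finset.fold_min_le _).mpr (Or.inl le_rfl)

lemma mem_S {t : ℝ} {O : Θ → Fin m} :
    t ∈ Set.Ioc (aF p O) (bF p O) ↔
      ((0 : ℝ) < t ∧ ∀ i, Fl p i (O i) < t) ∧ (t ≤ 1 ∧ ∀ i, t ≤ Fc p i (O i)) := by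
  simp [Set.mem_Ioc, aF, bF, Finset.fold_max_lt, Finset.le_fold_min]

lemma S_disjoint (hp0 : ∀ i j, 0 ≤ p i j) {O₁ O₂ : Θ → Fin m} (h : O₁ ≠ O₂) :
    Disjoint (Set.Ioc (aF p O₁) (bF p O₁)) (Set.Ioc (aF p O₂) (bF p O₂)) := by
  rw [Set.disjoint_left]
  intro t h1 h2
  obtain ⟨i, hne⟩ := Function.ne_iff.mp h
  rcases hne.lt_or_gt with hlt | hlt
  · have h1' := (mem_S.mp h1).2.2 i
    have h2' := (mem_S.mp h2).1.2 i
    exact absurd (h1'.trans (Fc_le_Fl hp0 hlt)) (not_le.mpr h2')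
  · have h2' := (mem_S.mp h2).2.2 i
    have h1' := (mem_S.mp h1).1.2 i
    exact absurd (h2'.trans (Fc_le_Fl hp0 hlt)) (not_le.mpr h1')

lemma R_eq_vol (O : Θ → Fin m) :
    R p O = (volume (Set.Ioc (aF p O) (bF p O))).toReal := by
  rw [Real.volume_Ioc, ENNReal.toReal_ofReal', R, max_comm]

lemma sum_R (hp0 : ∀ i j, 0 ≤ p i j) (s : Finset (Θ → Fin m)) :
    ∑ O ∈ s, R p O = (volume (⋃ O ∈ s, Set.Ioc (aF p O) (bF p O))).toReal := by
  rw [measure_biUnion_finset (fun x _ y _ hxy => S_disjoint hp0 hxy)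
    (fun _ _ => measurableSet_Ioc)]
  rw [ENNReal.toReal_sum (fun O _ => by rw [Real.volume_Ioc]; exact ENNReal.ofReal_ne_top)]
  exact Finset.sum_congr rfl fun O _ => R_eq_vol O

lemma quantile (hp1 : ∀ i, ∑ j, p i j = 1) (hm : 0 < m) {t : ℝ}
    (h0 : 0 < t) (h1 : t ≤ 1) (i : Θ) :
    ∃ j, Fl p i j < t ∧ t ≤ Fc p i j := by
  have hlastmem : (⟨m - 1, by omega⟩ : Fin m) ∈
      Finset.univ.filter (fun j => t ≤ Fc p i j) := by
    have hlast : Fc p i ⟨m - 1, by omega⟩ = 1 := by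
      rw [Fc, ← hp1 i]
      congr 1
      ext k
      simp only [Finset.mem_filter, Finset.mem_univ, true_and, iff_true, Fin.le_def]
      have := k.isLt; omega
    rw [Finset.mem_filter]
    exact ⟨Finset.mem_univ _, hlast ▸ h1⟩
  set s := Finset.univ.filter (fun j => t ≤ Fc p i j) with hs
  have hsne : s.Nonempty := ⟨_, hlastmem⟩
  refine ⟨s.min' hsne, ?_, (Finset.mem_filter.mp (s.min'_mem hsne)).2⟩
  by_cases hz : (s.min' hsne).val = 0
  · have hemp : Finset.univ.filter (fun k => k < s.min' hsne) = (∅ : Finset (Fin m)) := by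
      ext k
      simp only [Finset.mem_filter, Finset.mem_univ, true_and, Finset.notMem_empty,
        iff_false, not_lt, Fin.lt_def, hz]
      omega
    rw [Fl, hemp, Finset.sum_empty]; exact h0
  · set j' : Fin m := ⟨(s.min' hsne).val - 1, by omega⟩ with hj'
    have hlt' : j' < s.min' hsne := by
      simp only [Fin.lt_def, hj']; omega
    have hnot : ¬ t ≤ Fc p i j' := fun hc =>
      absurd (s.min'_le j' (Finset.mem_filter.mpr ⟨Finset.mem_univ _, hc⟩)) (not_le.mpr hlt')
    have heq : Fl p i (s.min' hsne) = Fc p i j' := by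
      rw [Fl, Fc]
      congr 1
      ext k
      simp only [Finset.mem_filter, Finset.mem_univ, true_and, Fin.lt_def, Fin.le_def, hj']
      omega
    rw [heq]; exact not_le.mp hnot

lemma interval_unique (hp0 : ∀ i j, 0 ≤ p i j) {t : ℝ} {i : Θ} {j j' : Fin m}
    (h1 : Fl p i j < t) (h2 : t ≤ Fc p i j)
    (h3 : Fl p i j' < t) (h4 : t ≤ Fc p i j') : j = j' := by
  rcases lt_trichotomy j j' with h | h | h
  · exact absurd (h2.trans (Fc_le_Fl hp0 h)) (not_le.mpr h3)
  · exact h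
  · exact absurd (h4.trans (Fc_le_Fl hp0 h)) (not_le.mpr h1)

lemma marg_pred (P : (Θ → Fin m) → ℝ)
    (hPm : ∀ i j, (∑ O : Θ → Fin m, if O i = j then P O else 0) = p i j)
    (i : Θ) (q : Fin m → Prop) [DecidablePred q] :
    ∑ O ∈ Finset.univ.filter (fun O => q (O i)), P O =
      ∑ k ∈ Finset.univ.filter q, p i k := by
  rw [Finset.sum_filter]
  have key : ∀ O : Θ → Fin m, (if q (O i) then P O else 0) =
      ∑ k ∈ Finset.univ.filter q, if O i = k then P O else 0 := by
    intro O
    rw [Finset.sum_ite_eq]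
    simp
  rw [Finset.sum_congr rfl (fun O _ => key O), Finset.sum_comm]
  exact Finset.sum_congr rfl fun k _ => hPm i k

lemma sum_filter_supp (P : (Θ → Fin m) → ℝ) (hP0 : ∀ O, 0 ≤ P O)
    (c : (Θ → Fin m) → Prop) [DecidablePred c] :
    ∑ O ∈ Finset.univ.filter (fun O => 0 < P O ∧ c O), P O =
      ∑ O ∈ Finset.univ.filter (fun O => c O), P O := by
  apply Finset.sum_subset
  · intro O hO
    rw [Finset.mem_filter] at hO ⊢
    exact ⟨hO.1, hO.2.2⟩
  · intro x hx hnx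
    simp only [Finset.mem_filter, Finset.mem_univ, true_and] at hx hnx
    have hnp : ¬ 0 < P x := fun h => hnx ⟨h, hx⟩
    exact le_antisymm (not_lt.mp hnp) (hP0 x)

lemma exists_subset_all {ι : Type*} [Fintype ι] [Nonempty ι] {β : Type*} [DecidableEq β]
    (T : ι → Finset β) (hcomp : ∀ i i', T i ⊆ T i' ∨ T i' ⊆ T i) :
    ∃ i₀, ∀ i, T i₀ ⊆ T i := by
  obtain ⟨i₀, -, hmin⟩ := Finset.exists_min_image Finset.univ (fun i => (T i).card)
    Finset.univ_nonempty
  refine ⟨i₀, fun i => ?_⟩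
  rcases hcomp i₀ i with h | h
  · exact h
  · rw [Finset.eq_of_subset_of_card_le h (hmin i (Finset.mem_univ i))]

lemma exists_superset_all {ι : Type*} [Fintype ι] [Nonempty ι] {β : Type*} [DecidableEq β]
    (T : ι → Finset β) (hcomp : ∀ i i', T i ⊆ T i' ∨ T i' ⊆ T i) :
    ∃ i₁, ∀ i, T i ⊆ T i₁ := by
  obtain ⟨i₁, -, hmax⟩ := Finset.exists_max_image Finset.univ (fun i => (T i).card)
    Finset.univ_nonempty
  refine ⟨i₁, fun i => ?_⟩
  rcases hcomp i i₁ with h | h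
  · exact h
  · rw [Finset.eq_of_subset_of_card_le h (hmax i (Finset.mem_univ i))]

end ComonotoneCouplingAux

open ComonotoneCouplingAux

open Finset in
theorem comonotone_coupling_unique
    {Θ : Type*} [Fintype Θ] [DecidableEq Θ] {m : ℕ}
    (o : Fin m → ℝ) (ho : StrictMono o)
    (p : Θ → Fin m → ℝ)
    (hp0 : ∀ i j, 0 ≤ p i j) (hp1 : ∀ i, ∑ j, p i j = 1) :
    ∃! P : (Θ → Fin m) → ℝ,
      (∀ O, 0 ≤ P O) ∧
      (∑ O : Θ → Fin m, P O = 1) ∧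
      (∀ i j, (∑ O : Θ → Fin m, if O i = j then P O else 0) = p i j) ∧
      (∀ O₁ O₂ : Θ → Fin m, 0 < P O₁ → 0 < P O₂ →
        (∀ i, o (O₁ i) ≤ o (O₂ i)) ∨ (∀ i, o (O₂ i) ≤ o (O₁ i))) := by
  classical
  refine ⟨R p, ⟨?_, ?_, ?_, ?_⟩, ?_⟩
  · -- nonnegativity
    intro O
    exact le_max_left _ _
  · -- total mass one
    by_cases hΘ : IsEmpty Θ
    · haveI := hΘ
      rw [Fintype.sum_unique]
      have ha : aF p (default : Θ → Fin m) = 0 := by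
        rw [aF, Finset.univ_eq_empty, Finset.fold_empty]
      have hb : bF p (default : Θ → Fin m) = 1 := by
        rw [bF, Finset.univ_eq_empty, Finset.fold_empty]
      rw [R, ha, hb]
      norm_num
    · haveI hne : Nonempty Θ := not_isEmpty_iff.mp hΘ
      obtain ⟨iN⟩ := hne
      have hm : 0 < m := by
        rcases Nat.eq_zero_or_pos m with h0 | h
        · exfalso
          subst h0
          have := hp1 iN
          simp at this
        · exact h
      rw [sum_R hp0 Finset.univ]
      have hcover : (⋃ O ∈ (Finset.univ : Finset (Θ → Fin m)),
          Set.Ioc (aF p O) (bF p O)) = Set.Ioc (0 : ℝ) 1 := by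
        apply Set.Subset.antisymm
        · intro t ht
          simp only [Set.mem_iUnion] at ht
          obtain ⟨O, -, htO⟩ := ht
          have h := mem_S.mp htO
          exact ⟨h.1.1, h.2.1⟩
        · intro t ht
          obtain ⟨h0, h1⟩ := ht
          choose Ot hOt1 hOt2 using fun i => quantile (p := p) hp1 hm h0 h1 i
          simp only [Set.mem_iUnion]
          exact ⟨Ot, Finset.mem_univ _, mem_S.mpr ⟨⟨h0, hOt1⟩, ⟨h1, hOt2⟩⟩⟩
      rw [hcover, Real.volume_Ioc]
      norm_num
  · -- marginals
    intro i j
    haveI : Nonempty Θ := ⟨i⟩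
    have hm : 0 < m := j.pos
    rw [← Finset.sum_filter, sum_R hp0]
    have hset : (⋃ O ∈ Finset.univ.filter (fun O : Θ → Fin m => O i = j),
        Set.Ioc (aF p O) (bF p O)) = Set.Ioc (Fl p i j) (Fc p i j) := by
      apply Set.Subset.antisymm
      · intro t ht
        simp only [Set.mem_iUnion, Finset.mem_filter] at ht
        obtain ⟨O, ⟨-, hOij⟩, htO⟩ := ht
        have h := mem_S.mp htO
        exact ⟨hOij ▸ h.1.2 i, hOij ▸ h.2.2 i⟩
      · intro t ht
        obtain ⟨hFl, hFc⟩ := ht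
        have h0 : 0 < t := lt_of_le_of_lt (Fl_nonneg hp0 i j) hFl
        have h1 : t ≤ 1 := hFc.trans (Fc_le_one hp0 hp1 i j)
        choose Ot hOt1 hOt2 using fun i' => quantile (p := p) hp1 hm h0 h1 i'
        have hOti : Ot i = j := interval_unique hp0 (hOt1 i) (hOt2 i) hFl hFc
        simp only [Set.mem_iUnion, Finset.mem_filter]
        exact ⟨Ot, ⟨Finset.mem_univ _, hOti⟩, mem_S.mpr ⟨⟨h0, hOt1⟩, ⟨h1, hOt2⟩⟩⟩
    rw [hset, Real.volume_Ioc, Fc_eq_Fl_add (p := p) i j,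
      show Fl p i j + p i j - Fl p i j = p i j by ring]
    exact ENNReal.toReal_ofReal (hp0 i j)
  · -- non-crossing
    intro O₁ O₂ h1 h2
    have ha1 : aF p O₁ < bF p O₁ := by
      by_contra hc
      push_neg at hc
      rw [R, max_eq_left (sub_nonpos.mpr hc)] at h1
      exact lt_irrefl 0 h1
    have ha2 : aF p O₂ < bF p O₂ := by
      by_contra hc
      push_neg at hc
      rw [R, max_eq_left (sub_nonpos.mpr hc)] at h2
      exact lt_irrefl 0 h2
    by_contra hc
    push_neg at hc
    obtain ⟨i₁, hi₁⟩ := hc.1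
    obtain ⟨i₂, hi₂⟩ := hc.2
    have hl1 : O₂ i₁ < O₁ i₁ := ho.lt_iff_lt.mp hi₁
    have hl2 : O₁ i₂ < O₂ i₂ := ho.lt_iff_lt.mp hi₂
    have : bF p O₁ ≤ aF p O₁ :=
      calc bF p O₁ ≤ Fc p i₂ (O₁ i₂) := bF_le_Fc _ _
        _ ≤ Fl p i₂ (O₂ i₂) := Fc_le_Fl hp0 hl2
        _ ≤ aF p O₂ := Fl_le_aF _ _
        _ ≤ bF p O₂ := ha2.le
        _ ≤ Fc p i₁ (O₂ i₁) := bF_le_Fc _ _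
        _ ≤ Fl p i₁ (O₁ i₁) := Fc_le_Fl hp0 hl1
        _ ≤ aF p O₁ := Fl_le_aF _ _
    exact absurd ha1 (not_lt.mpr this)
  · -- uniqueness
    rintro P ⟨hP0, hPs, hPm, hPc⟩
    funext O
    by_cases hΘ : IsEmpty Θ
    · haveI := hΘ
      have hPO : P O = 1 := by
        calc P O = P default := by rw [Unique.eq_default O]
          _ = ∑ O' : Θ → Fin m, P O' := (Fintype.sum_unique _).symm
          _ = 1 := hPs
      have ha : aF p O = 0 := by rw [aF, Finset.univ_eq_empty, Finset.fold_empty]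
      have hb : bF p O = 1 := by rw [bF, Finset.univ_eq_empty, Finset.fold_empty]
      rw [hPO, R, ha, hb]
      norm_num
    · haveI hne : Nonempty Θ := not_isEmpty_iff.mp hΘ
      have hchain : ∀ O₁ O₂, 0 < P O₁ → 0 < P O₂ →
          (∀ i, O₁ i ≤ O₂ i) ∨ (∀ i, O₂ i ≤ O₁ i) := by
        intro O₁ O₂ h1 h2
        rcases hPc O₁ O₂ h1 h2 with h | h
        · exact Or.inl fun i => ho.le_iff_le.mp (h i)
        · exact Or.inr fun i => ho.le_iff_le.mp (h i)
      set T : Θ → Finset (Θ → Fin m) :=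
        fun i => Finset.univ.filter (fun O' => 0 < P O' ∧ O' i ≤ O i) with hT
      have hTcomp : ∀ i i', T i ⊆ T i' ∨ T i' ⊆ T i := by
        intro i i'
        by_contra hcon
        push_neg at hcon
        obtain ⟨x, hx, hx'⟩ := Finset.not_subset.mp hcon.1
        obtain ⟨y, hy, hy'⟩ := Finset.not_subset.mp hcon.2
        simp only [hT, Finset.mem_filter, Finset.mem_univ, true_and] at hx hx' hy hy'
        rcases hchain x y hx.1 hy.1 with h | h
        · exact hx' ⟨hx.1, (h i').trans hy.2⟩
        · exact hy' ⟨hy.1, (h i).trans hx.2⟩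
      obtain ⟨i₀, hi₀⟩ := exists_subset_all T hTcomp
      have hTsum : ∀ i, ∑ O' ∈ T i, P O' = Fc p i (O i) := by
        intro i
        simp only [hT]
        rw [sum_filter_supp P hP0 (fun O' => O' i ≤ O i), Fc]
        exact marg_pred P hPm i (fun k => k ≤ O i)
      set A : Finset (Θ → Fin m) :=
        Finset.univ.filter (fun O' => 0 < P O' ∧ ∀ i, O' i ≤ O i) with hA
      have hAT : A = T i₀ := by
        apply Finset.Subset.antisymm
        · intro x hx
          simp only [hA, Finset.mem_filter, Finset.mem_univ, true_and] at hx
          simp only [hT, Finset.mem_filter, Finset.mem_univ, true_and]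
          exact ⟨hx.1, hx.2 i₀⟩
        · intro x hx
          have hxi : ∀ i, x ∈ T i := fun i => hi₀ i hx
          simp only [hT, Finset.mem_filter, Finset.mem_univ, true_and] at hx hxi
          simp only [hA, Finset.mem_filter, Finset.mem_univ, true_and]
          exact ⟨hx.1, fun i => (hxi i).2⟩
      have hAsum : ∑ O' ∈ A, P O' = Fc p i₀ (O i₀) := by rw [hAT]; exact hTsum i₀
      have hAle : ∀ i, ∑ O' ∈ A, P O' ≤ Fc p i (O i) := by
        intro i
        rw [hAT, ← hTsum i]
        exact Finset.sum_le_sum_of_subset_of_nonneg (hi₀ i) (fun x _ _ => hP0 x)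
      by_cases hPO : 0 < P O
      · -- O is in the support
        set U : Θ → Finset (Θ → Fin m) :=
          fun i => Finset.univ.filter (fun O' => 0 < P O' ∧ O' i < O i) with hU
        have hUcomp : ∀ i i', U i ⊆ U i' ∨ U i' ⊆ U i := by
          intro i i'
          by_contra hcon
          push_neg at hcon
          obtain ⟨x, hx, hx'⟩ := Finset.not_subset.mp hcon.1
          obtain ⟨y, hy, hy'⟩ := Finset.not_subset.mp hcon.2
          simp only [hU, Finset.mem_filter, Finset.mem_univ, true_and] at hx hx' hy hy'
          rcases hchain x y hx.1 hy.1 with h | h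
          · exact hx' ⟨hx.1, lt_of_le_of_lt (h i') hy.2⟩
          · exact hy' ⟨hy.1, lt_of_le_of_lt (h i) hx.2⟩
        obtain ⟨i₁, hi₁⟩ := exists_superset_all U hUcomp
        have hUsum : ∀ i, ∑ O' ∈ U i, P O' = Fl p i (O i) := by
          intro i
          simp only [hU]
          rw [sum_filter_supp P hP0 (fun O' => O' i < O i), Fl]
          exact marg_pred P hPm i (fun k => k < O i)
        set B : Finset (Θ → Fin m) :=
          Finset.univ.filter (fun O' => 0 < P O' ∧ O' ≠ O ∧ ∀ i, O' i ≤ O i) with hB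
        have hBU : B = U i₁ := by
          apply Finset.Subset.antisymm
          · intro x hx
            simp only [hB, Finset.mem_filter, Finset.mem_univ, true_and] at hx
            obtain ⟨hxp, hxne, hxle⟩ := hx
            have hex : ∃ i, x i < O i := by
              by_contra hno
              push_neg at hno
              exact hxne (funext fun i => le_antisymm (hxle i) (hno i))
            obtain ⟨i, hi⟩ := hex
            refine hi₁ i ?_
            simp only [hU, Finset.mem_filter, Finset.mem_univ, true_and]
            exact ⟨hxp, hi⟩
          · intro x hx
            simp only [hU, Finset.mem_filter, Finset.mem_univ, true_and] at hx
            obtain ⟨hxp, hxlt⟩ := hx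
            have hle : ∀ i, x i ≤ O i := by
              rcases hchain x O hxp hPO with h | h
              · exact h
              · exact absurd hxlt (not_lt.mpr (h i₁))
            simp only [hB, Finset.mem_filter, Finset.mem_univ, true_and]
            exact ⟨hxp, fun he => absurd (he ▸ hxlt) (lt_irrefl _), hle⟩
        have hBsum : ∑ O' ∈ B, P O' = Fl p i₁ (O i₁) := by rw [hBU]; exact hUsum i₁
        have hBge : ∀ i, Fl p i (O i) ≤ ∑ O' ∈ B, P O' := by
          intro i
          rw [hBU, ← hUsum i]
          exact Finset.sum_le_sum_of_subset_of_nonneg (hi₁ i) (fun x _ _ => hP0 x)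
        have hOB : O ∉ B := by
          simp only [hB, Finset.mem_filter, Finset.mem_univ, true_and]
          rintro ⟨-, hne', -⟩
          exact hne' rfl
        have hins : A = insert O B := by
          ext x
          simp only [hA, hB, Finset.mem_filter, Finset.mem_univ, true_and,
            Finset.mem_insert]
          constructor
          · rintro ⟨hxp, hxle⟩
            by_cases hxO : x = O
            · exact Or.inl hxO
            · exact Or.inr ⟨hxp, hxO, hxle⟩
          · rintro (rfl | ⟨hxp, -, hxle⟩)
            · exact ⟨hPO, fun i => le_rfl⟩
            · exact ⟨hxp, hxle⟩
        have hsplit : ∑ O' ∈ A, P O' = P O + ∑ O' ∈ B, P O' := by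
          rw [hins, Finset.sum_insert hOB]
        have hbF : bF p O = ∑ O' ∈ A, P O' := by
          refine le_antisymm ?_ ?_
          · rw [hAsum]; exact bF_le_Fc i₀ O
          · refine (Finset.le_fold_min _).mpr ⟨?_, fun i _ => hAle i⟩
            rw [hAsum]
            exact Fc_le_one hp0 hp1 i₀ (O i₀)
        have haF : aF p O = ∑ O' ∈ B, P O' := by
          refine le_antisymm ?_ ?_
          · refine (Finset.fold_max_le _).mpr ⟨?_, fun i _ => hBge i⟩
            exact Finset.sum_nonneg fun x _ => hP0 x
          · rw [hBsum]; exact Fl_le_aF i₁ O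
        rw [R, hbF, haF, hsplit, add_sub_cancel_right]
        exact (max_eq_right (hP0 O)).symm
      · -- O is not in the support
        have hPO0 : P O = 0 := le_antisymm (not_lt.mp hPO) (hP0 O)
        have hba : bF p O ≤ aF p O := by
          by_cases hAne : A.Nonempty
          · obtain ⟨Os, hOsA, hOsmax⟩ :=
              Finset.exists_max_image A (fun O' => ∑ i, (O' i : ℕ)) hAne
            have hOsA' := hOsA
            simp only [hA, Finset.mem_filter, Finset.mem_univ, true_and] at hOsA'
            have hOsle : ∀ O' ∈ A, ∀ i, O' i ≤ Os i := by
              intro O' hO' i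
              have hO'A := hO'
              simp only [hA, Finset.mem_filter, Finset.mem_univ, true_and] at hO'A
              rcases hchain O' Os hO'A.1 hOsA'.1 with h | h
              · exact h i
              · have hsum : ∑ i', ((O' i' : ℕ)) ≤ ∑ i', ((Os i' : ℕ)) := hOsmax O' hO'
                have heq : (Os i : ℕ) = (O' i : ℕ) := by
                  by_contra hne'
                  have hstrict : ∑ i', ((Os i' : ℕ)) < ∑ i', ((O' i' : ℕ)) :=
                    Finset.sum_lt_sum (fun i' _ => Fin.le_def.mp (h i'))
                      ⟨i, Finset.mem_univ _,
                        lt_of_le_of_ne (Fin.le_def.mp (h i)) hne'⟩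
                  omega
                exact le_of_eq (Fin.ext heq.symm)
            have hOsne : Os ≠ O := by
              intro he
              rw [he] at hOsA'
              exact hPO (hOsA'.1)
            have hex : ∃ i, Os i < O i := by
              by_contra hno
              push_neg at hno
              exact hOsne (funext fun i => le_antisymm (hOsA'.2 i) (hno i))
            obtain ⟨istar, histar⟩ := hex
            have h1' : ∑ O' ∈ A, P O' ≤ Fc p istar (Os istar) := by
              have hsub : A ⊆ Finset.univ.filter
                  (fun O' => 0 < P O' ∧ O' istar ≤ Os istar) := by
                intro x hx
                have hxA := hx
                simp only [hA, Finset.mem_filter, Finset.mem_univ, true_and] at hxA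
                exact Finset.mem_filter.mpr
                  ⟨Finset.mem_univ _, hxA.1, hOsle x hx istar⟩
              calc ∑ O' ∈ A, P O'
                  ≤ ∑ O' ∈ Finset.univ.filter
                      (fun O' => 0 < P O' ∧ O' istar ≤ Os istar), P O' :=
                    Finset.sum_le_sum_of_subset_of_nonneg hsub (fun x _ _ => hP0 x)
                _ = Fc p istar (Os istar) := by
                    rw [sum_filter_supp P hP0 (fun O' => O' istar ≤ Os istar), Fc]
                    exact marg_pred P hPm istar (fun k => k ≤ Os istar)
            calc bF p O ≤ Fc p i₀ (O i₀) := bF_le_Fc _ _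
              _ = ∑ O' ∈ A, P O' := hAsum.symm
              _ ≤ Fc p istar (Os istar) := h1'
              _ ≤ Fl p istar (O istar) := Fc_le_Fl hp0 histar
              _ ≤ aF p O := Fl_le_aF _ _
          · have hzero : ∑ O' ∈ A, P O' = 0 := by
              rw [Finset.not_nonempty_iff_eq_empty.mp hAne, Finset.sum_empty]
            calc bF p O ≤ Fc p i₀ (O i₀) := bF_le_Fc _ _
              _ = 0 := by rw [← hAsum, hzero]
              _ ≤ aF p O := aF_nonneg O
        rw [hPO0, R]
        exact (max_eq_left (sub_nonpos.mpr hba)).symm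
end

section
/- Topmost-mass characterization of the comonotone coupling: let P be a distribution over outcome vectors Θ → {o₁,...,o_m} with marginals p_{i,j}, all of whose support vectors are pairwise comparable (non-crossing). Define t_i = max{j : p_{i,j} > 0} and the topmost vector O_t by O_t(i) = o_{t_i}. Then P(O_t) = min_{i ∈ Θ} p_{i, t_i}. -/
/-!
Every support vector O satisfies P(O) ≤ p_{i,O(i)}, so its coordinates have positive marginal
mass and O ≤ O_t; taking O = O_t gives P(O_t) ≤ min_i p_{i,t_i}. The support is a finite chain,
so if it contains vectors other than O_t, the largest of them lies strictly below O_t in some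
coordinate i₀, and then so does every one of them. Hence O_t is the only support vector with
value o_{t_{i₀}} at i₀, and p_{i₀,t_{i₀}} = P(O_t).
-/

open Finset

theorem IsChain.exists_apply_lt_of_le {ι β : Type*} [Nonempty ι] [PartialOrder β]
    {s : Set (ι → β)} (hs : s.Finite) (hchain : IsChain (· ≤ ·) s) {t : ι → β}
    (hle : ∀ O ∈ s, O ≤ t) : ∃ i, ∀ O ∈ s, O ≠ t → O i < t i := by
  rcases (s \ {t}).eq_empty_or_nonempty with hempty | hne
  · obtain ⟨i⟩ := ‹Nonempty ι›
    exact ⟨i, fun O hO hOt => (Set.eq_empty_iff_forall_notMem.1 hempty O ⟨hO, hOt⟩).elim⟩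
  obtain ⟨M, hM⟩ := hs.sdiff.exists_maximal hne
  obtain ⟨i, hi⟩ := (Pi.lt_def.1 ((hle M hM.prop.1).lt_of_ne hM.prop.2)).2
  refine ⟨i, fun O hO hOt => lt_of_le_of_lt ?_ hi⟩
  have hOM : O ≤ M := by
    rcases hchain.total hO hM.prop.1 with h | h
    · exact h
    · exact hM.le_of_ge ⟨hO, hOt⟩ h
  exact hOM i

section FiberSum

variable {α β M : Type*} [Fintype α] [DecidableEq β] [AddCommMonoid M]

theorem le_sum_ite_apply_eq [PartialOrder M] [IsOrderedAddMonoid M] {P : α → M}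
    (hP : ∀ a, 0 ≤ P a) (f : α → β) (a : α) :
    P a ≤ ∑ b, if f b = f a then P b else 0 := by
  rw [← sum_filter]
  exact single_le_sum (fun b _ => hP b) (mem_filter.2 ⟨mem_univ a, rfl⟩)

theorem sum_ite_apply_eq_of_forall_ne {P : α → M} (f : α → β) (a : α)
    (h : ∀ b, b ≠ a → f b = f a → P b = 0) :
    (∑ b, if f b = f a then P b else 0) = P a := by
  rw [sum_eq_single a (fun b _ hb => ite_eq_right_iff.2 (h b hb)) (by simp), if_pos rfl]

end FiberSum

open Finset in
theorem comonotone_topmost_mass_general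
    {Θ : Type*} [Fintype Θ] [DecidableEq Θ] [Nonempty Θ] {m : ℕ}
    (P : (Θ → Fin m) → ℝ)
    (hP0 : ∀ O, 0 ≤ P O)
    (p : Θ → Fin m → ℝ)
    (hmarg : ∀ i j, (∑ O : Θ → Fin m, if O i = j then P O else 0) = p i j)
    (hnoncross : ∀ O₁ O₂ : Θ → Fin m, 0 < P O₁ → 0 < P O₂ →
      (∀ i, O₁ i ≤ O₂ i) ∨ (∀ i, O₂ i ≤ O₁ i))
    (t : Θ → Fin m)
    (ht : ∀ i, 0 < p i (t i) ∧ ∀ j, 0 < p i j → j ≤ t i) :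
    P (fun i => t i) = Finset.univ.inf' Finset.univ_nonempty (fun i => p i (t i)) := by
  have hmass_le : ∀ O i, P O ≤ p i (O i) := fun O i =>
    hmarg i (O i) ▸ le_sum_ite_apply_eq hP0 (fun O' => O' i) O
  have hsupport_le : ∀ O ∈ {O | 0 < P O}, O ≤ t := fun O hO i =>
    (ht i).2 _ (lt_of_lt_of_le hO (hmass_le O i))
  obtain ⟨i₀, hi₀⟩ := IsChain.exists_apply_lt_of_le (Set.toFinite _)
    (fun O₁ h₁ O₂ h₂ _ => hnoncross O₁ O₂ h₁ h₂) hsupport_le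
  have hmarg_top : p i₀ (t i₀) = P t := by
    rw [← hmarg]
    refine sum_ite_apply_eq_of_forall_ne (P := P) (fun O => O i₀) t fun O hOt hO => ?_
    by_contra hP
    exact (hi₀ O ((hP0 O).lt_of_ne' hP) hOt).ne hO
  exact le_antisymm (le_inf' _ _ fun i _ => hmass_le t i)
    ((inf'_le _ (mem_univ i₀)).trans hmarg_top.le)

open Finset in
theorem comonotone_topmost_mass
    {Θ : Type*} [Fintype Θ] [DecidableEq Θ] [Nonempty Θ] {m : ℕ}
    (o : Fin m → ℝ) (ho : StrictMono o)
    (P : (Θ → Fin m) → ℝ)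
    (hP0 : ∀ O, 0 ≤ P O) (hP1 : ∑ O : Θ → Fin m, P O = 1)
    (p : Θ → Fin m → ℝ)
    (hmarg : ∀ i j, (∑ O : Θ → Fin m, if O i = j then P O else 0) = p i j)
    (hnoncross : ∀ O₁ O₂ : Θ → Fin m, 0 < P O₁ → 0 < P O₂ →
      (∀ i, O₁ i ≤ O₂ i) ∨ (∀ i, O₂ i ≤ O₁ i))
    (t : Θ → Fin m)
    (ht : ∀ i, 0 < p i (t i) ∧ ∀ j, 0 < p i j → j ≤ t i) :
    P (fun i => t i) = Finset.univ.inf' Finset.univ_nonempty (fun i => p i (t i)) :=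
  comonotone_topmost_mass_general P hP0 p hmarg hnoncross t ht
end

section
/- In the min-cut graph construction, taking the downward closure of a cut does not increase its capacity: let G be the graph with vertices (Θ × {o₁,...,o_m}) ∪ {s, t} constructed by Algorithm 1 (vertical chain edges per type with capacities c_i(o_j), infinite-capacity horizontal edges from (i₂, o_j) to (i₁, o_j) for (i₁,i₂) ∈ R). For a finite-capacity s-t cut (S, S̄) (cutting no infinite edge), define the downward closure C(S) where (i, o_j) ∈ C(S) iff j ≤ max{j' : (i, o_{j'}) ∈ S}. Then (C(S), complement) cuts no infinite-capacity horizontal edge, and its set of cut vertical edges is a subset of those cut by S; hence its capacity is at most that of S. -/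
open Finset
open scoped Classical

/-- The cut has finite capacity: it cuts no infinite-capacity edge, i.e., every source
edge `s → (i, o₁)` stays inside, and no horizontal edge `(i₂, o_j) → (i₁, o_j)`
(present for `R i₁ i₂`, `i₁ ≠ i₂`) goes from the cut to its complement. -/
def FinCapCut {Θ : Type*} [Fintype Θ] [DecidableEq Θ] {m : ℕ} (hm : 0 < m)
    (R : Θ → Θ → Prop) (S : Finset (Θ × Fin m)) : Prop :=
  (∀ i : Θ, (i, (⟨0, hm⟩ : Fin m)) ∈ S) ∧
  (∀ i₁ i₂ : Θ, ∀ j : Fin m, R i₁ i₂ → i₁ ≠ i₂ → (i₂, j) ∈ S → (i₁, j) ∈ S)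

/-- The vertical edge out of `(i, o_j)` (to `(i, o_{j+1})`, or to `t` when `j = m-1`)
is cut by `S`. -/
def CutVertEdge {Θ : Type*} [Fintype Θ] [DecidableEq Θ] {m : ℕ}
    (S : Finset (Θ × Fin m)) (i : Θ) (j : Fin m) : Prop :=
  (i, j) ∈ S ∧ ∀ h : (j : ℕ) + 1 < m, (i, (⟨(j : ℕ) + 1, h⟩ : Fin m)) ∉ S

/-- The capacity of a finite-capacity cut: the sum of the capacities `c i j` of the
cut vertical edges. -/
noncomputable def cutCapacity {Θ : Type*} [Fintype Θ] [DecidableEq Θ] {m : ℕ}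
    (c : Θ → Fin m → ℝ) (S : Finset (Θ × Fin m)) : ℝ :=
  ∑ i : Θ, ∑ j : Fin m, if CutVertEdge S i j then c i j else 0

/-- The downward closure of a cut: `(i, o_j)` is included iff some `(i, o_{j'})` with
`j' ≥ j` is in `S`. -/
noncomputable def downClosure {Θ : Type*} [Fintype Θ] [DecidableEq Θ] {m : ℕ}
    (S : Finset (Θ × Fin m)) : Finset (Θ × Fin m) :=
  Finset.univ.filter (fun q : Θ × Fin m => ∃ j' : Fin m, q.2 ≤ j' ∧ (q.1, j') ∈ S)

theorem downClosure_capacity_le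
    {Θ : Type*} [Fintype Θ] [DecidableEq Θ] {m : ℕ} (hm : 0 < m)
    (R : Θ → Θ → Prop) (hrefl : ∀ i, R i i)
    (htrans : ∀ i₁ i₂ i₃, R i₁ i₂ → R i₂ i₃ → R i₁ i₃)
    (c : Θ → Fin m → ℝ) (hc0 : ∀ i j, 0 ≤ c i j)
    (S : Finset (Θ × Fin m)) (hfin : FinCapCut hm R S) :
    FinCapCut hm R (downClosure S) ∧
    (∀ i j, CutVertEdge (downClosure S) i j → CutVertEdge S i j) ∧
    cutCapacity c (downClosure S) ≤ cutCapacity c S := by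
  have hmem : ∀ (i : Θ) (j : Fin m),
      (i, j) ∈ downClosure S ↔ ∃ j' : Fin m, j ≤ j' ∧ (i, j') ∈ S := by
    intro i j
    simp [downClosure]
  have hcut : ∀ i j, CutVertEdge (downClosure S) i j → CutVertEdge S i j := by
    intro i j ⟨hjD, hnext⟩
    obtain ⟨j', hle, hj'S⟩ := (hmem i j).1 hjD
    have hjj' : j' = j := by
      by_contra hne
      have hlt : (j : ℕ) < (j' : ℕ) := lt_of_le_of_ne hle (fun h => hne (Fin.ext h.symm))
      have h1 : (j : ℕ) + 1 < m := lt_of_le_of_lt hlt j'.isLt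
      exact hnext h1 ((hmem i _).2 ⟨j', hlt, hj'S⟩)
    refine ⟨hjj' ▸ hj'S, fun h hS => ?_⟩
    exact hnext h ((hmem i _).2 ⟨_, le_refl _, hS⟩)
  refine ⟨⟨fun i => (hmem i _).2 ⟨_, le_refl _, hfin.1 i⟩,
    fun i₁ i₂ j hR hne hj => ?_⟩, hcut, ?_⟩
  · obtain ⟨j', hle, hj'S⟩ := (hmem i₂ j).1 hj
    exact (hmem i₁ j).2 ⟨j', hle, hfin.2 i₁ i₂ j' hR hne hj'S⟩
  · unfold cutCapacity
    refine Finset.sum_le_sum fun i _ => Finset.sum_le_sum fun j _ => ?_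
    by_cases h : CutVertEdge (downClosure S) i j
    · rw [if_pos h, if_pos (hcut i j h)]
    · rw [if_neg h]
      split <;> [exact hc0 i j; exact le_refl 0]
end

section
/- Correspondence between downward-closed finite cuts and truthful mechanisms: in the min-cut graph of Algorithm 1 (with R transitively closed), the map sending a downward-closed s-t cut (S, S̄) to the mechanism M(i) = max{o_j : (i,o_j) ∈ S} is a bijection between downward-closed s-t cuts of finite capacity and deterministic truthful mechanisms M : Θ → {o₁,...,o_m}, and under this bijection the capacity of the cut equals the cost ∑_i c_i(M(i)) of the mechanism. -/
open Finset
open scoped Classical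

/-- `S` is downward closed. -/
def DownClosed {Θ : Type*} [Fintype Θ] [DecidableEq Θ] {m : ℕ}
    (S : Finset (Θ × Fin m)) : Prop :=
  ∀ i : Θ, ∀ j₁ j₂ : Fin m, j₁ ≤ j₂ → (i, j₂) ∈ S → (i, j₁) ∈ S

/-- `M` is the mechanism corresponding to the cut `S`: column `i` of `S` is exactly
`{j : j ≤ M i}`, i.e., `M i = max {o_j : (i, o_j) ∈ S}`. -/
def CutCorresponds {Θ : Type*} [Fintype Θ] [DecidableEq Θ] {m : ℕ}
    (S : Finset (Θ × Fin m)) (M : Θ → Fin m) : Prop :=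
  ∀ i : Θ, ∀ j : Fin m, ((i, j) ∈ S ↔ j ≤ M i)

theorem cut_mechanism_correspondence
    {Θ : Type*} [Fintype Θ] [DecidableEq Θ] {m : ℕ} (hm : 0 < m)
    (R : Θ → Θ → Prop) (hrefl : ∀ i, R i i)
    (htrans : ∀ i₁ i₂ i₃, R i₁ i₂ → R i₂ i₃ → R i₁ i₃)
    (c : Θ → Fin m → ℝ) (hc0 : ∀ i j, 0 ≤ c i j) :
    (∀ S : Finset (Θ × Fin m), DownClosed S → FinCapCut hm R S →
      ∃! M : Θ → Fin m, CutCorresponds S M) ∧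
    (∀ (S : Finset (Θ × Fin m)) (M : Θ → Fin m),
      DownClosed S → FinCapCut hm R S → CutCorresponds S M →
      (∀ i₁ i₂, R i₁ i₂ → M i₂ ≤ M i₁) ∧
      cutCapacity c S = ∑ i : Θ, c i (M i)) ∧
    (∀ M : Θ → Fin m, (∀ i₁ i₂, R i₁ i₂ → M i₂ ≤ M i₁) →
      ∃! S : Finset (Θ × Fin m),
        DownClosed S ∧ FinCapCut hm R S ∧ CutCorresponds S M) := by

  refine ⟨?_, ?_, ?_⟩
  · intro S hdc hfc
    have hne : ∀ i : Θ, (Finset.univ.filter (fun j : Fin m => (i, j) ∈ S)).Nonempty :=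
      fun i => ⟨⟨0, hm⟩, by simp [hfc.1 i]⟩
    refine ⟨fun i => (Finset.univ.filter (fun j : Fin m => (i, j) ∈ S)).max' (hne i), ?_, ?_⟩
    · intro i j
      constructor
      · intro hj; exact Finset.le_max' _ j (by simp [hj])
      · intro hj
        have hmax := Finset.max'_mem _ (hne i)
        simp only [Finset.mem_filter, Finset.mem_univ, true_and] at hmax
        exact hdc i j _ hj hmax
    · intro M' hM'
      funext i
      have h1 : (i, M' i) ∈ S := (hM' i (M' i)).2 le_rfl
      have h2 := Finset.le_max' (Finset.univ.filter (fun j : Fin m => (i, j) ∈ S)) (M' i)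
        (by simp [h1])
      have h3 : (i, (Finset.univ.filter (fun j : Fin m => (i, j) ∈ S)).max' (hne i)) ∈ S := by
        have := Finset.max'_mem _ (hne i)
        simpa using this
      exact le_antisymm h2 ((hM' i _).1 h3)
  · intro S M hdc hfc hcc
    constructor
    · intro i₁ i₂ hR
      by_cases h : i₁ = i₂
      · subst h; exact le_rfl
      · exact (hcc i₁ (M i₂)).1 (hfc.2 i₁ i₂ (M i₂) hR h ((hcc i₂ (M i₂)).2 le_rfl))
    · have key : ∀ i j, CutVertEdge S i j ↔ j = M i := by
        intro i j
        constructor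
        · rintro ⟨h1, h2⟩
          have hj : (j : ℕ) ≤ (M i : ℕ) := (hcc i j).1 h1
          have hMi : (M i : ℕ) < m := (M i).isLt
          by_cases h : (j : ℕ) + 1 < m
          · have h3 := h2 h
            have h4 : ¬ ((j : ℕ) + 1 ≤ (M i : ℕ)) := by
              intro hle
              exact h3 ((hcc i _).2 (by simpa [Fin.le_def] using hle))
            exact Fin.ext (by omega)
          · exact Fin.ext (by omega)
        · rintro rfl
          refine ⟨(hcc i (M i)).2 le_rfl, ?_⟩
          intro h hmem
          have := (hcc i _).1 hmem
          simp [Fin.le_def] at this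
      unfold cutCapacity
      refine Finset.sum_congr rfl (fun i _ => ?_)
      simp only [key]
      simp
  · intro M hM
    refine ⟨Finset.univ.filter (fun p : Θ × Fin m => p.2 ≤ M p.1), ⟨?_, ⟨?_, ?_⟩, ?_⟩, ?_⟩
    · intro i j₁ j₂ hle h
      simp only [Finset.mem_filter, Finset.mem_univ, true_and] at h ⊢
      exact le_trans hle h
    · intro i
      simp only [Finset.mem_filter, Finset.mem_univ, true_and]
      exact Fin.le_def.mpr (Nat.zero_le _)
    · intro i₁ i₂ j hR _ h
      simp only [Finset.mem_filter, Finset.mem_univ, true_and] at h ⊢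
      exact le_trans h (hM i₁ i₂ hR)
    · intro i j
      simp
    · rintro S' ⟨_, _, hcc'⟩
      ext ⟨i, j⟩
      simp [hcc' i j]
end
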